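/- arXiv:1812.05887 — 6 statements merged into one kernel-verified Lean document; each statement's English description precedes it below -/
import Mathlib

section
/- Let p, q: Ω → [1,∞) be measurable with q(t) ≤ p(t) a.e., and define Musielak–Orlicz functions φ(t,u) = u^{q(t)}/q(t) and φ₁(t,u) = u^{p(t)}/p(t). Then (φ⊖φ₁)(t,u) = u^{r(t)}/r(t) where 1/r(t) = 1/q(t) − 1/p(t) (with r(t) = ∞ interpreted as the indicator-type conjugate when p(t) = q(t)). -/
open MeasureTheory ENNReal NNReal Filter

noncomputable section

variable {Ω : Type*} [MeasurableSpace Ω]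

/-- A Young function: vanishes at zero, tends to infinity, and is convex in the
extended-value sense on `[0,∞)`. -/
def IsYoung (φ : ℝ≥0 → ℝ≥0∞) : Prop :=
  φ 0 = 0 ∧ Tendsto φ atTop (nhds (∞ : ℝ≥0∞)) ∧
    ∀ u v θ : ℝ≥0, θ ≤ 1 →
      φ (θ * u + (1 - θ) * v) ≤ (θ : ℝ≥0∞) * φ u + ((1 - θ : ℝ≥0) : ℝ≥0∞) * φ v

/-- A Musielak--Orlicz function: `φ t` is a Young function for a.e. `t` and
`t ↦ φ t u` is measurable for each `u`. -/
def IsMusielakOrlicz (μ : Measure Ω) (φ : Ω → ℝ≥0 → ℝ≥0∞) : Prop :=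
  (∀ᵐ t ∂μ, IsYoung (φ t)) ∧ ∀ u : ℝ≥0, Measurable fun t => φ t u

/-- `b_φ(t) = inf {u : φ(t,u) = ∞}` (equal to `∞` if `φ(t,·)` is finite everywhere). -/
def bFun (φ : Ω → ℝ≥0 → ℝ≥0∞) (t : Ω) : ℝ≥0∞ :=
  ⨅ (v : ℝ≥0) (_ : φ t v = ∞), (v : ℝ≥0∞)

/-- The convex modular `I_φ(x) = ∫ φ(t,|x(t)|) dμ`. -/
def modular (μ : Measure Ω) (φ : Ω → ℝ≥0 → ℝ≥0∞) (x : Ω → ℝ) : ℝ≥0∞ :=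
  ∫⁻ t, φ t ‖x t‖₊ ∂μ

/-- The Luxemburg norm `inf {λ > 0 : I_φ(x/λ) ≤ 1}` (with value `∞` if no such `λ`). -/
def luxNorm (μ : Measure Ω) (φ : Ω → ℝ≥0 → ℝ≥0∞) (x : Ω → ℝ) : ℝ≥0∞ :=
  ⨅ (lam : ℝ≥0) (_ : 0 < lam ∧ modular μ φ (fun t => x t / (lam : ℝ)) ≤ 1), (lam : ℝ≥0∞)

/-- Membership in the Musielak--Orlicz space `L^φ`: `I_φ(λ x) < ∞` for some `λ > 0`. -/
def MemLphi (μ : Measure Ω) (φ : Ω → ℝ≥0 → ℝ≥0∞) (x : Ω → ℝ) : Prop :=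
  ∃ lam : ℝ≥0, 0 < lam ∧ modular μ φ (fun t => (lam : ℝ) * x t) < ∞

/-- The generalized Young conjugate of `φ₁` with respect to `φ` (formula used
on the non-atomic part): `(φ ⊖ φ₁)(t,u) = sup {φ(t,su) - φ₁(t,s) : 0 ≤ s < b_{φ₁}(t)}`. -/
def ominus (φ φ₁ : Ω → ℝ≥0 → ℝ≥0∞) (t : Ω) (u : ℝ≥0) : ℝ≥0∞ :=
  ⨆ (s : ℝ≥0) (_ : (s : ℝ≥0∞) < bFun φ₁ t), φ t (s * u) - φ₁ t s

/-- The right-continuous inverse `φ⁻¹(t,u) = inf {v ≥ 0 : φ(t,v) > u}`. -/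
def rcInv (φ : Ω → ℝ≥0 → ℝ≥0∞) (t : Ω) (u : ℝ≥0∞) : ℝ≥0∞ :=
  ⨅ (v : ℝ≥0) (_ : u < φ t v), (v : ℝ≥0∞)

/-- The generalized Young conjugate on the whole space: at an atom `t`
the supremum is taken over `0 ≤ s ≤ min (1/φ⁻¹(t,1/μ{t})) (b_{φ₁}(t)/2)`. -/
def ominusFull (μ : Measure Ω) (φ φ₁ : Ω → ℝ≥0 → ℝ≥0∞) (t : Ω) (u : ℝ≥0) : ℝ≥0∞ :=
  if μ {t} = 0 then ominus φ φ₁ t u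
  else ⨆ (s : ℝ≥0) (_ : (s : ℝ≥0∞) ≤ min (rcInv φ t (μ {t})⁻¹)⁻¹ (bFun φ₁ t / 2)),
    φ t (s * u) - φ₁ t s

/-- `y` is a pointwise multiplier from `L^{φ₁}` to `L^{φ}`. -/
def MemMul (μ : Measure Ω) (φ₁ φ : Ω → ℝ≥0 → ℝ≥0∞) (y : Ω → ℝ) : Prop :=
  ∀ x : Ω → ℝ, Measurable x → MemLphi μ φ₁ x → MemLphi μ φ (fun t => x t * y t)

/-- The operator norm of a pointwise multiplier. -/
def mulNorm (μ : Measure Ω) (φ₁ φ : Ω → ℝ≥0 → ℝ≥0∞) (y : Ω → ℝ) : ℝ≥0∞ :=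
  ⨆ (x : Ω → ℝ) (_ : Measurable x ∧ luxNorm μ φ₁ x ≤ 1), luxNorm μ φ (fun t => x t * y t)

/-- The truncated generalized Young conjugate `φ ⊖_a φ₁` (non-atomic part):
supremum over `0 ≤ s ≤ a` when `b_{φ₁}(t) = ∞`, and over
`0 ≤ s ≤ (a/(a+1)) b_{φ₁}(t)` when `b_{φ₁}(t) < ∞`. -/
def ominusTr (a : ℝ≥0) (φ φ₁ : Ω → ℝ≥0 → ℝ≥0∞) (t : Ω) (u : ℝ≥0) : ℝ≥0∞ :=
  if bFun φ₁ t = ∞ then ⨆ (s : ℝ≥0) (_ : s ≤ a), φ t (s * u) - φ₁ t s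
  else ⨆ (s : ℝ≥0) (_ : (s : ℝ≥0∞) ≤ ((a : ℝ≥0∞) / ((a : ℝ≥0∞) + 1)) * bFun φ₁ t),
    φ t (s * u) - φ₁ t s

/-!
On power functions `b_{φ₁} = ∞`, so `φ ⊖ φ₁` is the unrestricted supremum over `s ≥ 0` of
`(s u)^q / q - s^p / p`. For `q < p`, Young's inequality with the Hölder conjugate exponents
`p / q` and `r / q` bounds it by `u^r / r`, with equality at `s = u^(r/p)`, where
`s^p = (s u)^q = u^r`. For `p = q` it is `s^q (u^q - 1) / q`: zero when `u ≤ 1`, unbounded in `s`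
when `u > 1`.
-/

namespace ENNReal

lemma coe_rpow_div_ofReal_ne_top {p r : ℝ} (x : ℝ≥0) (hr : 0 ≤ r) (hp : 0 < p) :
    (x : ℝ≥0∞) ^ r / ENNReal.ofReal p ≠ ∞ :=
  (ENNReal.div_lt_top (rpow_ne_top_of_nonneg hr coe_ne_top) (ofReal_pos.2 hp).ne').ne

lemma div_ofReal_div_ofReal (x : ℝ≥0∞) {a b : ℝ} (ha : 0 < a) :
    x / ENNReal.ofReal a / ENNReal.ofReal b = x / ENNReal.ofReal (a * b) := by
  rw [ofReal_mul ha.le, div_eq_mul_inv, div_eq_mul_inv, div_eq_mul_inv, mul_assoc,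
    ENNReal.mul_inv (Or.inl (ofReal_pos.2 ha).ne') (Or.inl ofReal_ne_top)]

lemma div_ofReal_add_div_ofReal {p q r : ℝ} (h : Real.HolderTriple p r q) (x : ℝ≥0∞) :
    x / ENNReal.ofReal p + x / ENNReal.ofReal r = x / ENNReal.ofReal q := by
  simp only [div_eq_mul_inv, ← mul_add]
  rw [← ofReal_inv_of_pos h.left_pos, ← ofReal_inv_of_pos h.right_pos, ← ofReal_inv_of_pos h.pos',
    ← ofReal_add (inv_nonneg.2 h.left_pos.le) (inv_nonneg.2 h.right_pos.le), h.inv_add_inv_eq_inv]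

theorem young_inequality_of_holderTriple {p q r : ℝ} (h : Real.HolderTriple p r q) (a b : ℝ≥0∞) :
    (a * b) ^ q / ENNReal.ofReal q ≤ a ^ p / ENNReal.ofReal p + b ^ r / ENNReal.ofReal r := by
  have hq := h.pos'
  calc (a * b) ^ q / ENNReal.ofReal q = a ^ q * b ^ q / ENNReal.ofReal q := by
        rw [mul_rpow_of_nonneg _ _ hq.le]
    _ ≤ ((a ^ q) ^ (p / q) / ENNReal.ofReal (p / q)
          + (b ^ q) ^ (r / q) / ENNReal.ofReal (r / q)) / ENNReal.ofReal q :=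
        ENNReal.div_le_div_right (young_inequality _ _ h.holderConjugate_div_div) _
    _ = a ^ p / ENNReal.ofReal p + b ^ r / ENNReal.ofReal r := by
        rw [ENNReal.add_div, ← rpow_mul, ← rpow_mul, mul_div_cancel₀ _ hq.ne',
          mul_div_cancel₀ _ hq.ne', div_ofReal_div_ofReal _ (div_pos h.left_pos hq),
          div_ofReal_div_ofReal _ (div_pos h.right_pos hq), div_mul_cancel₀ _ hq.ne',
          div_mul_cancel₀ _ hq.ne']

end ENNReal

theorem iSup_mul_rpow_div_sub_rpow_div {p q r : ℝ} (h : Real.HolderTriple p r q) (u : ℝ≥0) :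
    ⨆ s : ℝ≥0, ((s * u : ℝ≥0) : ℝ≥0∞) ^ q / ENNReal.ofReal q - (s : ℝ≥0∞) ^ p / ENNReal.ofReal p
      = (u : ℝ≥0∞) ^ r / ENNReal.ofReal r := by
  refine le_antisymm (iSup_le fun s => ?_) ?_
  · rw [tsub_le_iff_right, coe_mul, add_comm]
    exact young_inequality_of_holderTriple h _ _
  · have hq := h.pos'
    have hs₀p : ((u ^ (r / p) : ℝ≥0) : ℝ≥0∞) ^ p = (u : ℝ≥0∞) ^ r := by
      rw [← coe_rpow_of_nonneg _ h.left_pos.le, ← NNReal.rpow_mul,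
        div_mul_cancel₀ _ h.left_pos.ne', coe_rpow_of_nonneg _ h.right_pos.le]
    have hs₀q : ((u ^ (r / p) * u : ℝ≥0) : ℝ≥0∞) ^ q = (u : ℝ≥0∞) ^ r := by
      have hexp : r / p * q + q = r := calc
        r / p * q + q = r * (p⁻¹ + r⁻¹) * q := by
          field_simp [h.left_pos.ne', h.right_pos.ne']
        _ = r := by rw [h.inv_add_inv_eq_inv, mul_assoc, inv_mul_cancel₀ hq.ne', mul_one]
      rw [← coe_rpow_of_nonneg _ hq.le, NNReal.mul_rpow, ← NNReal.rpow_mul,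
        ← NNReal.rpow_add' (by rw [hexp]; exact h.right_pos.ne'), hexp,
        coe_rpow_of_nonneg _ h.right_pos.le]
    refine le_iSup_of_le (u ^ (r / p)) ?_
    rw [hs₀q, hs₀p, ← div_ofReal_add_div_ofReal h]
    exact le_sub_of_add_le_left (coe_rpow_div_ofReal_ne_top u h.right_pos.le h.left_pos) le_rfl

theorem iSup_mul_rpow_div_sub_rpow_div_self {q : ℝ} (hq : 0 < q) (u : ℝ≥0) :
    ⨆ s : ℝ≥0, ((s * u : ℝ≥0) : ℝ≥0∞) ^ q / ENNReal.ofReal q - (s : ℝ≥0∞) ^ q / ENNReal.ofReal q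
      = if u ≤ 1 then 0 else ∞ := by
  split_ifs with hu
  · refine ENNReal.iSup_eq_zero.2 fun s => tsub_eq_zero_of_le ?_
    gcongr
    exact mul_le_of_le_one_right zero_le hu
  · have hc : ((u : ℝ≥0∞) ^ q - 1) / ENNReal.ofReal q ≠ 0 := by
      have hu_q : 1 < (u : ℝ≥0∞) ^ q := one_lt_rpow (by exact_mod_cast not_le.1 hu) hq
      exact (ENNReal.div_pos (tsub_pos_of_lt hu_q).ne' ofReal_ne_top).ne'
    have hterm (s : ℝ≥0) : ((s * u : ℝ≥0) : ℝ≥0∞) ^ q / ENNReal.ofReal q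
        - (s : ℝ≥0∞) ^ q / ENNReal.ofReal q
          = (s : ℝ≥0∞) ^ q * (((u : ℝ≥0∞) ^ q - 1) / ENNReal.ofReal q) := by
      have hs : (s : ℝ≥0∞) ^ q ≠ ∞ := rpow_ne_top_of_nonneg hq.le coe_ne_top
      rw [coe_mul, mul_rpow_of_nonneg _ _ hq.le, ← ENNReal.sub_div fun _ _ => (ofReal_pos.2 hq).ne',
        ← mul_div_assoc, ENNReal.mul_sub fun _ _ => hs, mul_one]
    have hsup : ⨆ s : ℝ≥0, (s : ℝ≥0∞) ^ q = ∞ := by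
      simp_rw [← coe_rpow_of_nonneg _ hq.le]
      rw [iSup_coe_eq_top, (NNReal.rpow_left_surjective hq.ne').range_eq]
      exact not_bddAbove_univ
    simp_rw [hterm, ← ENNReal.iSup_mul, hsup, top_mul hc]

lemma ominus_eq_iSup_of_ne_top {α : Type*} {φ φ₁ : α → ℝ≥0 → ℝ≥0∞} {t : α} (h : ∀ v, φ₁ t v ≠ ∞)
    (u : ℝ≥0) : ominus φ φ₁ t u = ⨆ s : ℝ≥0, φ t (s * u) - φ₁ t s := by
  have hb : bFun φ₁ t = ∞ := by simp [bFun, h]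
  simp [ominus, hb]

theorem ominus_nakano_power_general (p q : Ω → ℝ) (h1 : ∀ t, 1 ≤ q t) (hqp : ∀ t, q t ≤ p t) :
    ∀ t : Ω, ∀ u : ℝ≥0,
      ominus (fun t (u : ℝ≥0) => ((u : ℝ≥0∞) ^ (q t)) / ENNReal.ofReal (q t))
        (fun t (u : ℝ≥0) => ((u : ℝ≥0∞) ^ (p t)) / ENNReal.ofReal (p t)) t u =
      if q t < p t then
        ((u : ℝ≥0∞) ^ ((p t * q t) / (p t - q t))) /
          ENNReal.ofReal ((p t * q t) / (p t - q t))
      else (if u ≤ 1 then 0 else ∞) := by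
  intro t u
  have hq : 0 < q t := one_pos.trans_le (h1 t)
  have hp : 0 < p t := hq.trans_le (hqp t)
  rw [ominus_eq_iSup_of_ne_top fun v => coe_rpow_div_ofReal_ne_top v hp.le hp]
  by_cases hlt : q t < p t
  · have hpq : 0 < p t - q t := sub_pos.2 hlt
    have h : (p t).HolderTriple (p t * q t / (p t - q t)) (q t) :=
      ⟨by field_simp; ring, hp, by positivity⟩
    rw [if_pos hlt]
    exact iSup_mul_rpow_div_sub_rpow_div h u
  · rw [if_neg hlt, le_antisymm (not_lt.1 hlt) (hqp t)]
    exact iSup_mul_rpow_div_sub_rpow_div_self hq u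

/-- For `φ(t,u) = u^{q(t)}/q(t)` and `φ₁(t,u) = u^{p(t)}/p(t)`
with `1 ≤ q ≤ p`, the conjugate is `(φ ⊖ φ₁)(t,u) = u^{r(t)}/r(t)` with
`1/r = 1/q - 1/p` (i.e. `r = pq/(p-q)`), interpreted as the indicator-type
conjugate where `p(t) = q(t)`. -/
theorem ominus_nakano_power (μ : Measure Ω) [SigmaFinite μ] [NullSingletonClass μ]
    (p q : Ω → ℝ) (hp : Measurable p) (hq : Measurable q)
    (h1 : ∀ t, 1 ≤ q t) (hqp : ∀ t, q t ≤ p t) :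
    ∀ t : Ω, ∀ u : ℝ≥0,
      ominus (fun t (u : ℝ≥0) => ((u : ℝ≥0∞) ^ (q t)) / ENNReal.ofReal (q t))
        (fun t (u : ℝ≥0) => ((u : ℝ≥0∞) ^ (p t)) / ENNReal.ofReal (p t)) t u =
      if q t < p t then
        ((u : ℝ≥0∞) ^ ((p t * q t) / (p t - q t))) /
          ENNReal.ofReal ((p t * q t) / (p t - q t))
      else (if u ≤ 1 then 0 else ∞) :=
  ominus_nakano_power_general p q h1 hqp
end
end

section
/- Let φ, φ₀, φ₁ be Musielak–Orlicz functions over (Ω,Σ,μ) with supp L^{φ₁} = Ω, and suppose there is D > 0 such that D·φ₁^{-1}(t,u)·φ₀^{-1}(t,u) ≥ φ^{-1}(t,u) for a.e. t and all u ≥ 0. Then L^φ ⊂ L^{φ₀} ⊙ L^{φ₁}; moreover any 0 ≤ z ∈ L^φ factors as z = z₀z₁ with ‖z_i‖_{φ_i} ≲ √(D‖z‖_φ) (i = 0,1), via z_i(t) = φ_i^{-1}(t,y(t))·√( z(t)/(φ₀^{-1}(t,y(t)) φ₁^{-1}(t,y(t))) ) where y(t) = φ(t,z(t)). -/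
open MeasureTheory ENNReal NNReal Filter

noncomputable section

variable {Ω : Type*} [MeasurableSpace Ω]

namespace MOaux


theorem young_smul_le {ψ : ℝ≥0 → ℝ≥0∞} (h : IsYoung ψ) {θ : ℝ≥0} (hθ : θ ≤ 1) (u : ℝ≥0) :
    ψ (θ * u) ≤ (θ : ℝ≥0∞) * ψ u := by
  have := h.2.2 u 0 θ hθ
  simpa [h.1] using this

theorem young_mono {ψ : ℝ≥0 → ℝ≥0∞} (h : IsYoung ψ) : Monotone ψ := by
  intro u v huv
  rcases eq_or_ne v 0 with rfl | hv
  · simp [le_antisymm huv zero_le]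
  · have hθ : u / v ≤ 1 := div_le_one_of_le₀ huv zero_le
    have := young_smul_le h hθ v
    rw [div_mul_cancel₀ _ hv] at this
    refine this.trans ?_
    exact mul_le_of_le_one_left zero_le (by exact_mod_cast hθ)

/-- left regularization of `t ↦ φ t (f t)` through rationals: measurable and a.e. dominated. -/
def yF (φ : Ω → ℝ≥0 → ℝ≥0∞) (f : Ω → ℝ≥0) (t : Ω) : ℝ≥0∞ :=
  ⨆ (q : ℚ) (_ : (q : ℝ).toNNReal < f t), φ t ((q : ℝ).toNNReal)

/-- rational right-continuous inverse of `φ` along `y`. -/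
def rInv (φ : Ω → ℝ≥0 → ℝ≥0∞) (y : Ω → ℝ≥0∞) (t : Ω) : ℝ≥0∞ :=
  ⨅ (q : ℚ) (_ : y t < φ t ((q : ℝ).toNNReal)), (((q : ℝ).toNNReal : ℝ≥0) : ℝ≥0∞)

theorem measurable_yF {φ : Ω → ℝ≥0 → ℝ≥0∞} {f : Ω → ℝ≥0}
    (hφ : ∀ u : ℝ≥0, Measurable fun t => φ t u) (hf : Measurable f) :
    Measurable (yF φ f) := by
  apply Measurable.iSup; intro q
  have : (fun t => ⨆ (_ : (q : ℝ).toNNReal < f t), φ t ((q : ℝ).toNNReal))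
      = fun t => if (q : ℝ).toNNReal < f t then φ t ((q : ℝ).toNNReal) else 0 := by
    funext t; by_cases h : (q : ℝ).toNNReal < f t <;> simp [h]
  rw [this]
  exact Measurable.ite (measurableSet_lt measurable_const hf) (hφ _) measurable_const

theorem measurable_rInv {φ : Ω → ℝ≥0 → ℝ≥0∞} {y : Ω → ℝ≥0∞}
    (hφ : ∀ u : ℝ≥0, Measurable fun t => φ t u) (hy : Measurable y) :
    Measurable (rInv φ y) := by
  apply Measurable.iInf; intro q
  have : (fun t => ⨅ (_ : y t < φ t ((q : ℝ).toNNReal)), (((q : ℝ).toNNReal : ℝ≥0) : ℝ≥0∞))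
      = fun t => if y t < φ t ((q : ℝ).toNNReal) then (((q : ℝ).toNNReal : ℝ≥0) : ℝ≥0∞) else ∞ := by
    funext t; by_cases h : y t < φ t ((q : ℝ).toNNReal) <;> simp [h]
  rw [this]
  exact Measurable.ite (measurableSet_lt hy (hφ _)) measurable_const measurable_const

theorem yF_le {φ : Ω → ℝ≥0 → ℝ≥0∞} {f : Ω → ℝ≥0} {t : Ω} (hm : Monotone (φ t)) :
    yF φ f t ≤ φ t (f t) :=
  iSup₂_le fun _ hq => hm hq.le

/-- if `v` is strictly below the rational inverse at `t`, then `φ t v ≤ y t`. -/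
theorem apply_le_of_lt_rInv {φ : Ω → ℝ≥0 → ℝ≥0∞} {y : Ω → ℝ≥0∞} {t : Ω}
    (hm : Monotone (φ t)) {v : ℝ≥0} (hv : (v : ℝ≥0∞) < rInv φ y t) : φ t v ≤ y t := by
  by_contra hlt
  push_neg at hlt
  have hA : rInv φ y t ≤ (v : ℝ≥0∞) := by
    by_contra hv'
    push_neg at hv'
    obtain ⟨q, _, h1, h2⟩ := ENNReal.lt_iff_exists_rat_btwn.1 hv'
    have hvq : v ≤ (q : ℝ).toNNReal := by exact_mod_cast h1.le
    have : y t < φ t ((q : ℝ).toNNReal) := lt_of_lt_of_le hlt (hm hvq)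
    exact absurd (iInf₂_le q this) (not_le.2 h2)
  exact absurd (lt_of_lt_of_le hv hA) (lt_irrefl _)

/-- `f t ≤ rcInv φ t (yF φ f t)`. -/
theorem le_rcInv_yF {φ : Ω → ℝ≥0 → ℝ≥0∞} {f : Ω → ℝ≥0} {t : Ω} (hm : Monotone (φ t)) :
    (f t : ℝ≥0∞) ≤ rcInv φ t (yF φ f t) := by
  refine le_iInf₂ fun v hv => ?_
  by_contra hvf
  push_neg at hvf
  have hvf' : (v : ℝ≥0∞) < (f t : ℝ≥0∞) := by exact_mod_cast hvf
  obtain ⟨q, _, h1, h2⟩ := ENNReal.lt_iff_exists_rat_btwn.1 hvf'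
  have hq : (q : ℝ).toNNReal < f t := by exact_mod_cast h2
  have h3 : φ t v ≤ yF φ f t := by
    refine le_trans (hm (by exact_mod_cast h1.le)) ?_
    exact le_iSup₂ (f := fun (q : ℚ) (_ : (q : ℝ).toNNReal < f t) => φ t ((q : ℝ).toNNReal)) q hq
  exact absurd (lt_of_lt_of_le hv h3) (lt_irrefl _)

theorem rcInv_le_rInv {φ : Ω → ℝ≥0 → ℝ≥0∞} {y : Ω → ℝ≥0∞} {t : Ω} :
    rcInv φ t (y t) ≤ rInv φ y t :=
  le_iInf₂ fun q hq => iInf₂_le ((q : ℝ).toNNReal) hq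

theorem measurable_sInfSet {T : ℕ → Set Ω} (hT : ∀ n, MeasurableSet (T n)) :
    Measurable fun t => sInf {n | t ∈ T n} := by
  apply measurable_to_countable'
  intro k
  rcases eq_or_ne k 0 with rfl | hk
  · have : (fun t => sInf {n | t ∈ T n}) ⁻¹' {0} = T 0 ∪ ⋂ n, (T n)ᶜ := by
      ext t
      simp [Nat.sInf_eq_zero, Set.eq_empty_iff_forall_notMem]
    rw [this]
    exact (hT 0).union (MeasurableSet.iInter fun n => (hT n).compl)
  · have : (fun t => sInf {n | t ∈ T n}) ⁻¹' {k} = T k ∩ ⋂ (j) (_ : j < k), (T j)ᶜ := by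
      ext t
      simp only [Set.mem_preimage, Set.mem_singleton_iff, Set.mem_inter_iff, Set.mem_iInter,
        Set.mem_compl_iff]
      constructor
      · intro h
        have hne : {n | t ∈ T n}.Nonempty := by
          by_contra hemp
          rw [Set.not_nonempty_iff_eq_empty] at hemp
          rw [hemp, Nat.sInf_empty] at h
          exact hk h.symm
        refine ⟨h ▸ Nat.sInf_mem hne, fun j hj hmem => ?_⟩
        have := Nat.sInf_le (s := {n | t ∈ T n}) hmem
        omega
      · rintro ⟨hmem, hbelow⟩
        have h1 : sInf {n | t ∈ T n} ≤ k := Nat.sInf_le hmem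
        have h2 : sInf {n | t ∈ T n} ∈ {n | t ∈ T n} := Nat.sInf_mem ⟨k, hmem⟩
        by_contra hne
        exact hbelow _ (lt_of_le_of_ne h1 hne) h2
    rw [this]
    exact (hT k).inter (MeasurableSet.iInter fun j => MeasurableSet.iInter fun _ => (hT j).compl)

theorem exists_small_apply_le {ψ : ℝ≥0 → ℝ≥0∞} (hY : IsYoung ψ)
    (hfin : ∃ v : ℝ≥0, 0 < v ∧ ψ v ≠ ∞) {g : ℝ≥0} (hg : 0 < g) :
    ∃ n : ℕ, ψ ((2⁻¹ : ℝ≥0) ^ n) ≤ (g : ℝ≥0∞) := by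
  obtain ⟨v₀, hv₀, hfin⟩ := hfin
  obtain ⟨m, hm⟩ : ∃ m : ℕ, (2⁻¹ : ℝ≥0∞) ^ m * ψ v₀ ≤ (g : ℝ≥0∞) := by
    rcases eq_or_ne (ψ v₀) 0 with h0 | h0
    · exact ⟨0, by simp [h0]⟩
    · obtain ⟨m, hm⟩ := ENNReal.exists_inv_two_pow_lt
        (show ((g : ℝ≥0∞) / ψ v₀) ≠ 0 by simp [hfin, hg.ne'])
      refine ⟨m, le_of_lt ?_⟩
      exact (ENNReal.lt_div_iff_mul_lt (Or.inl h0) (Or.inl hfin)).1 hm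
  set θ' : ℝ≥0 := (2⁻¹ : ℝ≥0) ^ m with hθ'
  have hθ'le : θ' ≤ 1 := pow_le_one₀ zero_le (by norm_num)
  have hconv : ψ (θ' * v₀) ≤ (θ' : ℝ≥0∞) * ψ v₀ := young_smul_le hY hθ'le v₀
  have hθcast : ((θ' : ℝ≥0) : ℝ≥0∞) = (2⁻¹ : ℝ≥0∞) ^ m := by
    rw [hθ', ENNReal.coe_pow, ENNReal.coe_inv (by norm_num : (2:ℝ≥0) ≠ 0), ENNReal.coe_ofNat]
  obtain ⟨n, hn⟩ : ∃ n : ℕ, (2⁻¹ : ℝ≥0) ^ n ≤ θ' * v₀ := by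
    obtain ⟨n, hn⟩ := NNReal.exists_pow_lt_of_lt_one
      (show 0 < θ' * v₀ by positivity) (show (2⁻¹ : ℝ≥0) < 1 by rw [← NNReal.coe_lt_coe]; norm_num)
    exact ⟨n, hn.le⟩
  exact ⟨n, le_trans (young_mono hY hn) (le_trans hconv (by rw [hθcast]; exact hm))⟩


theorem construction
    (μ : Measure Ω) [SigmaFinite μ] (φ φ₀ φ₁ : Ω → ℝ≥0 → ℝ≥0∞)
    (hφ : IsMusielakOrlicz μ φ) (hφ₀ : IsMusielakOrlicz μ φ₀) (hφ₁ : IsMusielakOrlicz μ φ₁)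
    (hsupp : ∀ᵐ t ∂μ, 0 < bFun φ₁ t)
    (D : ℝ≥0) (hD : 0 < D)
    (hinv : ∀ᵐ t ∂μ, ∀ u : ℝ≥0, rcInv φ t u ≤ (D : ℝ≥0∞) * rcInv φ₁ t u * rcInv φ₀ t u)
    (lam : ℝ≥0) (hlam : 0 < lam) (z : Ω → ℝ) (hz : Measurable z) (hz0 : ∀ t, 0 ≤ z t)
    (hM : modular μ φ (fun t => z t / (lam : ℝ)) ≠ ∞) :
    ∃ z₀ z₁ : Ω → ℝ, Measurable z₀ ∧ Measurable z₁ ∧ (∀ t, z t = z₀ t * z₁ t) ∧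
      modular μ φ₀ (fun t => z₀ t / ((8 * NNReal.sqrt (D * lam) : ℝ≥0) : ℝ)) ≤
        (modular μ φ (fun t => z t / (lam : ℝ)) + 1) / 2 ∧
      modular μ φ₁ (fun t => z₁ t / ((8 * NNReal.sqrt (D * lam) : ℝ≥0) : ℝ)) ≤
        (modular μ φ (fun t => z t / (lam : ℝ)) + 1) / 2 := by
  classical
  have hsq : (0 : ℝ≥0) < NNReal.sqrt (D * lam) := NNReal.sqrt_pos.2 (mul_pos hD hlam)
  set c : ℝ≥0 := 4 * NNReal.sqrt (D * lam) with hc_def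
  have hc0 : c ≠ 0 := by
    rw [hc_def]; exact (mul_pos (by norm_num) hsq).ne'
  have hcpos : (0:ℝ≥0) < c := zero_lt_iff.2 hc0
  set gw : Ω → ℝ≥0 := fun t => ‖z t / (lam : ℝ)‖₊ with hgw_def
  have hgwm : Measurable gw := (hz.div_const _).nnnorm
  set y : Ω → ℝ≥0∞ := yF φ gw with hy_def
  have hym : Measurable y := measurable_yF hφ.2 hgwm
  set A : Ω → ℝ≥0∞ := rInv φ₀ y with hA_def
  set B : Ω → ℝ≥0∞ := rInv φ₁ y with hB_def
  have hAm : Measurable A := measurable_rInv hφ₀.2 hym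
  have hBm : Measurable B := measurable_rInv hφ₁.2 hym
  have hyle_ae : ∀ᵐ t ∂μ, y t ≤ φ t (gw t) :=
    hφ.1.mono fun t ht => yF_le (young_mono ht)
  have hyint : ∫⁻ t, y t ∂μ ≤ modular μ φ (fun t => z t / (lam : ℝ)) := by
    rw [modular]
    exact lintegral_mono_ae hyle_ae
  have hyfin_ae : ∀ᵐ t ∂μ, y t ≠ ∞ :=
    (ae_lt_top hym (lt_of_le_of_lt hyint (lt_top_iff_ne_top.2 hM)).ne).mono fun t ht => ht.ne
  obtain ⟨g, hgpos, hgmeas, hgint⟩ := exists_pos_lintegral_lt_of_sigmaFinite μ one_ne_zero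
  set θ : ℕ → ℝ≥0 := fun n => (2⁻¹ : ℝ≥0) ^ n with hθ_def
  have hθpos : ∀ n, 0 < θ n := fun n => pow_pos (by norm_num) n
  set T : ℕ → Set Ω := fun n => {t | φ₁ t (θ n) ≤ (g t : ℝ≥0∞)} with hT_def
  have hTm : ∀ n, MeasurableSet (T n) :=
    fun n => measurableSet_le (hφ₁.2 _) hgmeas.coe_nnreal_ennreal
  set nn : Ω → ℕ := fun t => sInf {n | t ∈ T n} with hnn_def
  have hnnm : Measurable nn := measurable_sInfSet hTm
  set α : Ω → ℝ≥0 := fun t => (A t).toNNReal with hα_def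
  set β : Ω → ℝ≥0 := fun t => (B t).toNNReal with hβ_def
  have hαm : Measurable α := hAm.ennreal_toNNReal
  have hβm : Measurable β := hBm.ennreal_toNNReal
  set r : Ω → ℝ≥0 := fun t => gw t / (D * β t * α t) with hr_def
  have hrm : Measurable r := hgwm.div ((measurable_const.mul hβm).mul hαm)
  set a0 : Ω → ℝ≥0 := fun t => α t * NNReal.sqrt (D * r t) with ha0_def
  have ha0m : Measurable a0 :=
    hαm.mul (NNReal.continuous_sqrt.measurable.comp (measurable_const.mul hrm))
  set SL : ℝ≥0 := NNReal.sqrt lam with hSL_def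
  have hSL0 : SL ≠ 0 := (NNReal.sqrt_pos.2 hlam).ne'
  set z₀ : Ω → ℝ := fun t =>
    if z t = 0 then 0
    else if B t = ∞ then (if A t = ∞ ∨ α t = 0 then 1 else ((α t / 2 * c : ℝ≥0) : ℝ))
    else if A t = ∞ then z t / ((c : ℝ) * ((θ (nn t) : ℝ≥0) : ℝ))
    else if a0 t = 0 then 1 else ((SL * a0 t : ℝ≥0) : ℝ) with hz₀_def
  set z₁ : Ω → ℝ := fun t => if z t = 0 then 0 else z t / z₀ t with hz₁_def
  have hz₀m : Measurable z₀ := by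
    rw [hz₀_def]
    refine Measurable.ite (hz (measurableSet_singleton 0)) measurable_const ?_
    refine Measurable.ite (hBm (measurableSet_singleton ∞)) ?_ ?_
    · refine Measurable.ite ?_ measurable_const ?_
      · exact (hAm (measurableSet_singleton ∞)).union (hαm (measurableSet_singleton 0))
      · exact measurable_coe_nnreal_real.comp ((hαm.div_const 2).mul_const c)
    · refine Measurable.ite (hAm (measurableSet_singleton ∞)) ?_ ?_
      · exact hz.div (measurable_const.mul
          (measurable_coe_nnreal_real.comp (measurable_from_nat.comp hnnm)))
      · refine Measurable.ite (ha0m (measurableSet_singleton 0)) measurable_const ?_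
        exact measurable_coe_nnreal_real.comp (measurable_const.mul ha0m)
  have hz₀m' := hz₀m
  have hz₁m : Measurable z₁ := by
    rw [hz₁_def]
    exact Measurable.ite (hz (measurableSet_singleton 0)) measurable_const (hz.div hz₀m)
  have hz₀pos : ∀ t, z t ≠ 0 → 0 < z₀ t := by
    intro t ht
    have hzt' : 0 < z t := lt_of_le_of_ne (hz0 t) (Ne.symm ht)
    rw [hz₀_def]
    simp only
    rw [if_neg ht]
    split_ifs with h1 h2 h3 h4
    · norm_num
    · have hα2 : (0:ℝ≥0) < α t / 2 * c := by
        push_neg at h2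
        exact mul_pos (div_pos (zero_lt_iff.2 h2.2) (by norm_num)) hcpos
      exact_mod_cast hα2
    · exact div_pos hzt' (mul_pos (by exact_mod_cast hcpos) (by exact_mod_cast hθpos (nn t)))
    · norm_num
    · have : (0:ℝ≥0) < SL * a0 t := mul_pos (zero_lt_iff.2 hSL0) (zero_lt_iff.2 h4)
      exact_mod_cast this
  have hfact : ∀ t, z t = z₀ t * z₁ t := by
    intro t
    by_cases ht : z t = 0
    · rw [hz₁_def]; simp only; rw [if_pos ht, mul_zero, ht]
    · rw [hz₁_def]; simp only; rw [if_neg ht, mul_comm, div_mul_cancel₀ _ (hz₀pos t ht).ne']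
  -- the key pointwise estimate
  have key : ∀ t, IsYoung (φ t) → IsYoung (φ₀ t) → IsYoung (φ₁ t) →
      (∀ u : ℝ≥0, rcInv φ t u ≤ (D : ℝ≥0∞) * rcInv φ₁ t u * rcInv φ₀ t u) →
      0 < bFun φ₁ t → y t ≠ ∞ →
      φ₀ t ‖z₀ t / (c : ℝ)‖₊ ≤ y t ∧ φ₁ t ‖z₁ t / (c : ℝ)‖₊ ≤ y t + g t := by
    intro t hYt hY0t hY1t hinvt hbt hytop
    have hm : Monotone (φ t) := young_mono hYt
    have hm0 : Monotone (φ₀ t) := young_mono hY0t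
    have hm1 : Monotone (φ₁ t) := young_mono hY1t
    have hgwle : (gw t : ℝ≥0∞) ≤ (D : ℝ≥0∞) * B t * A t := by
      have h1 : (gw t : ℝ≥0∞) ≤ rcInv φ t (y t) := le_rcInv_yF hm
      have h2 : rcInv φ t (y t) ≤ (D : ℝ≥0∞) * rcInv φ₁ t (y t) * rcInv φ₀ t (y t) := by
        have := hinvt (y t).toNNReal
        rwa [coe_toNNReal hytop] at this
      exact h1.trans (h2.trans (mul_le_mul'
        (mul_le_mul' le_rfl rcInv_le_rInv) rcInv_le_rInv))
    have hA' : ∀ v : ℝ≥0, (v : ℝ≥0∞) < A t → φ₀ t v ≤ y t :=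
      fun v hv => apply_le_of_lt_rInv hm0 hv
    have hB' : ∀ v : ℝ≥0, (v : ℝ≥0∞) < B t → φ₁ t v ≤ y t :=
      fun v hv => apply_le_of_lt_rInv hm1 hv
    by_cases hzt : z t = 0
    · have hz₀t : z₀ t = 0 := by rw [hz₀_def]; simp only; rw [if_pos hzt]
      have hz₁t : z₁ t = 0 := by rw [hz₁_def]; simp only; rw [if_pos hzt]
      constructor
      · rw [hz₀t]; simp [hY0t.1]
      · rw [hz₁t]; simp [hY1t.1]
    · have hzt' : 0 < z t := lt_of_le_of_ne (hz0 t) (Ne.symm hzt)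
      have hgw0 : gw t ≠ 0 := by
        rw [hgw_def]
        simp only [ne_eq, nnnorm_eq_zero]
        exact div_ne_zero hzt (by exact_mod_cast hlam.ne')
      have hznorm : ‖z t‖₊ = gw t * lam := by
        rw [hgw_def]
        simp only
        rw [nnnorm_div, NNReal.nnnorm_eq, div_mul_cancel₀ _ hlam.ne']
      have hz₁val : z₁ t = z t / z₀ t := by rw [hz₁_def]; simp only; rw [if_neg hzt]
      by_cases hBtop : B t = ∞
      · -- Case 2 : B = ∞
        have hφ₁all : ∀ v : ℝ≥0, φ₁ t v ≤ y t :=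
          fun v => hB' v (by rw [hBtop]; exact coe_lt_top)
        have hAne : A t ≠ 0 := by
          intro h0
          rw [h0, mul_zero] at hgwle
          exact hgw0 (by exact_mod_cast le_antisymm hgwle zero_le)
        constructor
        · by_cases hAor : A t = ∞ ∨ α t = 0
          · have hz₀t : z₀ t = 1 := by
              rw [hz₀_def]; simp only; rw [if_neg hzt, if_pos hBtop, if_pos hAor]
            have hAtop : A t = ∞ := by
              rcases hAor with h | h
              · exact h
              · rcases (ENNReal.toNNReal_eq_zero_iff _).1 h with h' | h'
                · exact absurd h' hAne
                · exact h'
            rw [hz₀t]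
            exact hA' _ (by rw [hAtop]; exact coe_lt_top)
          · have hz₀t : z₀ t = ((α t / 2 * c : ℝ≥0) : ℝ) := by
              rw [hz₀_def]; simp only; rw [if_neg hzt, if_pos hBtop, if_neg hAor]
            push_neg at hAor
            have hnorm : ‖z₀ t / (c : ℝ)‖₊ = α t / 2 := by
              rw [hz₀t, ← NNReal.coe_div, NNReal.nnnorm_eq, mul_div_cancel_right₀ _ hc0]
            rw [hnorm]
            refine hA' _ ?_
            rw [← coe_toNNReal hAor.1]
            exact_mod_cast NNReal.half_lt_self (fun h => hAor.2 h)
        · exact le_trans (hφ₁all _) le_self_add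
      · by_cases hAtop : A t = ∞
        · -- Case 3 : A = ∞, B < ∞
          have hφ₀all : ∀ v : ℝ≥0, φ₀ t v ≤ y t :=
            fun v => hA' v (by rw [hAtop]; exact coe_lt_top)
          have hz₀t : z₀ t = z t / ((c : ℝ) * ((θ (nn t) : ℝ≥0) : ℝ)) := by
            rw [hz₀_def]; simp only; rw [if_neg hzt, if_neg hBtop, if_pos hAtop]
          have hnnmem : φ₁ t (θ (nn t)) ≤ (g t : ℝ≥0∞) := by
            have hfin : ∃ v : ℝ≥0, 0 < v ∧ φ₁ t v ≠ ∞ := by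
              obtain ⟨q, hq0, h1, h2⟩ := ENNReal.lt_iff_exists_rat_btwn.1 hbt
              refine ⟨(q : ℝ).toNNReal, by exact_mod_cast h1, fun hinf => ?_⟩
              have : bFun φ₁ t ≤ (((q : ℝ).toNNReal : ℝ≥0) : ℝ≥0∞) :=
                iInf₂_le ((q : ℝ).toNNReal) hinf
              exact absurd (lt_of_le_of_lt this h2) (lt_irrefl _)
            obtain ⟨n, hn⟩ := exists_small_apply_le hY1t hfin (hgpos t)
            have hne : {n | t ∈ T n}.Nonempty := ⟨n, hn⟩
            exact Nat.sInf_mem hne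
          constructor
          · exact hφ₀all _
          · have hz₁t : z₁ t = (c : ℝ) * ((θ (nn t) : ℝ≥0) : ℝ) := by
              rw [hz₁val, hz₀t, div_div_eq_mul_div, mul_comm (z t) _, mul_div_assoc,
                div_self hzt, mul_one]
            have hnorm : ‖z₁ t / (c : ℝ)‖₊ = θ (nn t) := by
              rw [hz₁t, mul_comm, mul_div_assoc, div_self (by exact_mod_cast hc0), mul_one,
                NNReal.nnnorm_eq]
            rw [hnorm]
            exact le_trans hnnmem le_add_self
        · -- Case 1 : A, B < ∞
          have hAne : A t ≠ 0 := by
            intro h0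
            rw [h0, mul_zero] at hgwle
            exact hgw0 (by exact_mod_cast le_antisymm hgwle zero_le)
          have hBne : B t ≠ 0 := by
            intro h0
            rw [h0, mul_zero, zero_mul] at hgwle
            exact hgw0 (by exact_mod_cast le_antisymm hgwle zero_le)
          have hαpos : 0 < α t := ENNReal.toNNReal_pos hAne hAtop
          have hβpos : 0 < β t := ENNReal.toNNReal_pos hBne hBtop
          have hcoeA : ((α t : ℝ≥0) : ℝ≥0∞) = A t := coe_toNNReal hAtop
          have hcoeB : ((β t : ℝ≥0) : ℝ≥0∞) = B t := coe_toNNReal hBtop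
          have hgwle' : gw t ≤ D * β t * α t := by
            rw [← ENNReal.coe_le_coe]
            push_cast
            rw [hcoeA, hcoeB]
            exact hgwle
          have hden : D * β t * α t ≠ 0 :=
            (mul_pos (mul_pos hD hβpos) hαpos).ne'
          have hrle : r t ≤ 1 := by
            rw [hr_def]
            exact (div_le_one (zero_lt_iff.2 hden)).2 hgwle'
          have hrpos : 0 < r t := div_pos (zero_lt_iff.2 hgw0) (zero_lt_iff.2 hden)
          have hgweq : r t * (D * β t * α t) = gw t := div_mul_cancel₀ _ hden
          have ha0pos : 0 < a0 t := mul_pos hαpos (NNReal.sqrt_pos.2 (mul_pos hD hrpos))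
          have hz₀t : z₀ t = ((SL * a0 t : ℝ≥0) : ℝ) := by
            rw [hz₀_def]; simp only
            rw [if_neg hzt, if_neg hBtop, if_neg hAtop, if_neg ha0pos.ne']
          have hsrle : NNReal.sqrt (r t) ≤ 1 := by
            rw [← NNReal.sqrt_one]
            exact NNReal.sqrt_le_sqrt.2 hrle
          have hsrne : NNReal.sqrt (r t) ≠ 0 := (NNReal.sqrt_pos.2 hrpos).ne'
          have hsDne : NNReal.sqrt D ≠ 0 := (NNReal.sqrt_pos.2 hD).ne'
          have ha0eq : a0 t = α t * (NNReal.sqrt D * NNReal.sqrt (r t)) := by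
            rw [ha0_def]; simp only; rw [NNReal.sqrt_mul]
          have hceq : c = 4 * (NNReal.sqrt D * SL) := by
            rw [hc_def, hSL_def, NNReal.sqrt_mul]
          constructor
          · have hnorm : ‖z₀ t / (c : ℝ)‖₊ = SL * a0 t / c := by
              rw [hz₀t, ← NNReal.coe_div, NNReal.nnnorm_eq]
            have hval : SL * a0 t / c = α t * NNReal.sqrt (r t) / 4 := by
              obtain ⟨sr, hsr⟩ : ∃ x, x = NNReal.sqrt (r t) := ⟨_, rfl⟩
              obtain ⟨sD, hsD⟩ : ∃ x, x = NNReal.sqrt D := ⟨_, rfl⟩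
              rw [ha0eq, hceq, ← hsr, ← hsD]
              have hsD0 : sD ≠ 0 := by rw [hsD]; exact hsDne
              field_simp
            rw [hnorm, hval]
            refine hA' _ ?_
            rw [← hcoeA]
            refine ENNReal.coe_lt_coe.2 ?_
            calc α t * NNReal.sqrt (r t) / 4 ≤ α t * 1 / 4 := by
                  gcongr
              _ = α t / 4 := by rw [mul_one]
              _ < α t := div_lt_self hαpos (by norm_num)
          · have hnorm : ‖z₁ t / (c : ℝ)‖₊ = gw t * lam / (SL * a0 t * c) := by
              rw [hz₁val, hz₀t, div_div, ← NNReal.coe_mul, nnnorm_div, NNReal.nnnorm_eq,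
                ← hznorm]
            have hval : gw t * lam / (SL * a0 t * c) = β t * NNReal.sqrt (r t) / 4 := by
              obtain ⟨sr, hsr⟩ : ∃ x, x = NNReal.sqrt (r t) := ⟨_, rfl⟩
              obtain ⟨sD, hsD⟩ : ∃ x, x = NNReal.sqrt D := ⟨_, rfl⟩
              rw [← hgweq, ha0eq, hceq, ← hsr, ← hsD]
              have hsr0 : sr ≠ 0 := by rw [hsr]; exact hsrne
              have hsD0 : sD ≠ 0 := by rw [hsD]; exact hsDne
              have hr2 : r t = sr * sr := by rw [hsr]; exact (NNReal.mul_self_sqrt _).symm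
              have hD2 : D = sD * sD := by rw [hsD]; exact (NNReal.mul_self_sqrt _).symm
              have hlam2 : lam = SL * SL := by rw [hSL_def]; exact (NNReal.mul_self_sqrt _).symm
              rw [hr2, hD2, hlam2]
              field_simp
            rw [hnorm, hval]
            refine le_trans (hB' _ ?_) le_self_add
            rw [← hcoeB]
            refine ENNReal.coe_lt_coe.2 ?_
            calc β t * NNReal.sqrt (r t) / 4 ≤ β t * 1 / 4 := by
                  gcongr
              _ = β t / 4 := by rw [mul_one]
              _ < β t := div_lt_self hβpos (by norm_num)
  -- upgrade to a.e. with halving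
  have haeKey : ∀ᵐ t ∂μ,
      φ₀ t ‖z₀ t / (c : ℝ)‖₊ ≤ y t ∧ φ₁ t ‖z₁ t / (c : ℝ)‖₊ ≤ y t + g t := by
    filter_upwards [hφ.1, hφ₀.1, hφ₁.1, hinv, hsupp, hyfin_ae] with t h1 h2 h3 h4 h5 h6
    exact key t h1 h2 h3 h4 h5 h6
  have hΛeq : (8 * NNReal.sqrt (D * lam) : ℝ≥0) = 2 * c := by
    rw [hc_def]; ring
  have hhalf : ∀ (w : Ω → ℝ) (t : Ω), ‖w t / ((2 * c : ℝ≥0) : ℝ)‖₊ = 2⁻¹ * ‖w t / (c : ℝ)‖₊ := by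
    intro w t
    push_cast
    rw [mul_comm (2:ℝ) (c:ℝ), ← div_div, nnnorm_div]
    norm_num
    rw [div_eq_inv_mul]
    rw [one_div]
  have hmod₀ : modular μ φ₀ (fun t => z₀ t / ((8 * NNReal.sqrt (D * lam) : ℝ≥0) : ℝ)) ≤
      (modular μ φ (fun t => z t / (lam : ℝ)) + 1) / 2 := by
    rw [modular, hΛeq]
    have hb : ∀ᵐ t ∂μ, φ₀ t ‖z₀ t / ((2 * c : ℝ≥0) : ℝ)‖₊ ≤ 2⁻¹ * (y t + g t) := by
      filter_upwards [haeKey, hφ₀.1] with t hk hY0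
      rw [hhalf z₀ t]
      calc φ₀ t (2⁻¹ * ‖z₀ t / (c : ℝ)‖₊) ≤ ((2⁻¹ : ℝ≥0) : ℝ≥0∞) * φ₀ t ‖z₀ t / (c : ℝ)‖₊ :=
            young_smul_le hY0 (by norm_num) _
        _ ≤ 2⁻¹ * (y t + g t) := by
            rw [ENNReal.coe_inv (by norm_num), ENNReal.coe_ofNat]
            exact mul_le_mul' le_rfl (le_trans hk.1 le_self_add)
    calc ∫⁻ t, φ₀ t ‖z₀ t / ((2 * c : ℝ≥0) : ℝ)‖₊ ∂μ ≤ ∫⁻ t, 2⁻¹ * (y t + g t) ∂μ :=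
          lintegral_mono_ae hb
      _ = 2⁻¹ * ∫⁻ t, (y t + g t) ∂μ :=
          lintegral_const_mul _ (hym.add hgmeas.coe_nnreal_ennreal)
      _ = 2⁻¹ * ((∫⁻ t, y t ∂μ) + ∫⁻ t, (g t : ℝ≥0∞) ∂μ) := by
          rw [lintegral_add_left hym]
      _ ≤ 2⁻¹ * (modular μ φ (fun t => z t / (lam : ℝ)) + 1) :=
          mul_le_mul' le_rfl (add_le_add hyint hgint.le)
      _ = (modular μ φ (fun t => z t / (lam : ℝ)) + 1) / 2 := by
          rw [ENNReal.div_eq_inv_mul]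
  have hmod₁ : modular μ φ₁ (fun t => z₁ t / ((8 * NNReal.sqrt (D * lam) : ℝ≥0) : ℝ)) ≤
      (modular μ φ (fun t => z t / (lam : ℝ)) + 1) / 2 := by
    rw [modular, hΛeq]
    have hb : ∀ᵐ t ∂μ, φ₁ t ‖z₁ t / ((2 * c : ℝ≥0) : ℝ)‖₊ ≤ 2⁻¹ * (y t + g t) := by
      filter_upwards [haeKey, hφ₁.1] with t hk hY1
      rw [hhalf z₁ t]
      calc φ₁ t (2⁻¹ * ‖z₁ t / (c : ℝ)‖₊) ≤ ((2⁻¹ : ℝ≥0) : ℝ≥0∞) * φ₁ t ‖z₁ t / (c : ℝ)‖₊ :=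
            young_smul_le hY1 (by norm_num) _
        _ ≤ 2⁻¹ * (y t + g t) := by
            rw [ENNReal.coe_inv (by norm_num), ENNReal.coe_ofNat]
            exact mul_le_mul' le_rfl hk.2
    calc ∫⁻ t, φ₁ t ‖z₁ t / ((2 * c : ℝ≥0) : ℝ)‖₊ ∂μ ≤ ∫⁻ t, 2⁻¹ * (y t + g t) ∂μ :=
          lintegral_mono_ae hb
      _ = 2⁻¹ * ∫⁻ t, (y t + g t) ∂μ :=
          lintegral_const_mul _ (hym.add hgmeas.coe_nnreal_ennreal)
      _ = 2⁻¹ * ((∫⁻ t, y t ∂μ) + ∫⁻ t, (g t : ℝ≥0∞) ∂μ) := by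
          rw [lintegral_add_left hym]
      _ ≤ 2⁻¹ * (modular μ φ (fun t => z t / (lam : ℝ)) + 1) :=
          mul_le_mul' le_rfl (add_le_add hyint hgint.le)
      _ = (modular μ φ (fun t => z t / (lam : ℝ)) + 1) / 2 := by
          rw [ENNReal.div_eq_inv_mul]
  exact ⟨z₀, z₁, hz₀m, hz₁m, hfact, hmod₀, hmod₁⟩

theorem luxNorm_zero_of_ae_zero (μ : Measure Ω) (ψ : Ω → ℝ≥0 → ℝ≥0∞)
    (hψ : IsMusielakOrlicz μ ψ) {x : Ω → ℝ} (hx : ∀ᵐ t ∂μ, x t = 0) :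
    luxNorm μ ψ x = 0 := by
  have hmod : ∀ l : ℝ≥0, modular μ ψ (fun t => x t / (l : ℝ)) = 0 := by
    intro l
    rw [modular]
    have h0 : (fun t => ψ t ‖x t / (l : ℝ)‖₊) =ᵐ[μ] (fun _ => 0) := by
      filter_upwards [hx, hψ.1] with t h1 h2
      rw [h1]
      simp [h2.1]
    rw [lintegral_congr_ae h0, lintegral_zero]
  refine le_antisymm ?_ zero_le
  refine ENNReal.le_of_forall_pos_le_add fun ε hε _ => ?_
  rw [zero_add]
  exact iInf₂_le ε ⟨hε, by rw [hmod]; exact zero_le_one⟩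

theorem modular_zero_of_ae_zero (μ : Measure Ω) (ψ : Ω → ℝ≥0 → ℝ≥0∞)
    (hψ : IsMusielakOrlicz μ ψ) {x : Ω → ℝ} (hx : ∀ᵐ t ∂μ, x t = 0) :
    modular μ ψ x = 0 := by
  rw [modular]
  have h0 : (fun t => ψ t ‖x t‖₊) =ᵐ[μ] (fun _ => 0) := by
    filter_upwards [hx, hψ.1] with t h1 h2
    rw [h1]
    simp [h2.1]
  rw [lintegral_congr_ae h0, lintegral_zero]

theorem ae_zero_of_luxNorm_zero (μ : Measure Ω) (φ : Ω → ℝ≥0 → ℝ≥0∞)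
    (hφ : IsMusielakOrlicz μ φ) (z : Ω → ℝ) (hz : Measurable z)
    (hlux : luxNorm μ φ z = 0) : ∀ᵐ t ∂μ, z t = 0 := by
  have hsel : ∀ n : ℕ, ∃ l : ℝ≥0,
      ((0 < l ∧ modular μ φ (fun t => z t / (l : ℝ)) ≤ 1) ∧ (l : ℝ≥0∞) < 2⁻¹ ^ n) := by
    intro n
    have h2 : (0 : ℝ≥0∞) < 2⁻¹ ^ n :=
      ENNReal.pow_pos (ENNReal.inv_pos.2 (by norm_num)) n
    have hlt : luxNorm μ φ z < 2⁻¹ ^ n := by rw [hlux]; exact h2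
    rw [luxNorm] at hlt
    obtain ⟨l, hl⟩ := iInf_lt_iff.1 hlt
    obtain ⟨hc, hl2⟩ := iInf_lt_iff.1 hl
    exact ⟨l, hc, hl2⟩
  choose lam hlam hlamlt using hsel
  set Y : ℕ → Ω → ℝ≥0∞ := fun n t => yF φ (fun s => ‖z s / (lam n : ℝ)‖₊) t with hY_def
  have hYm : ∀ n, Measurable (Y n) := fun n => measurable_yF hφ.2 (hz.div_const _).nnnorm
  have hYint : ∀ n, ∫⁻ t, Y n t ∂μ ≤ 1 := by
    intro n
    have hle : ∫⁻ t, Y n t ∂μ ≤ modular μ φ (fun t => z t / (lam n : ℝ)) := by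
      rw [modular]
      exact lintegral_mono_ae (hφ.1.mono fun t ht => yF_le (young_mono ht))
    exact hle.trans (hlam n).2
  have hpt : ∀ᵐ t ∂μ, z t ≠ 0 → Filter.liminf (fun n => Y n t) atTop = ⊤ := by
    filter_upwards [hφ.1] with t hYoung hzt
    refine eq_top_iff.2 (ENNReal.le_of_forall_nnreal_lt fun b _ => ?_)
    have hev : ∀ᶠ u in atTop, φ t u ∈ Set.Ioi (b : ℝ≥0∞) :=
      hYoung.2.1.eventually (Ioi_mem_nhds coe_lt_top)
    obtain ⟨u₀, hu₀⟩ := eventually_atTop.1 hev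
    have hzn : ‖z t‖₊ ≠ 0 := nnnorm_ne_zero_iff.2 hzt
    set ε : ℝ≥0 := ‖z t‖₊ / (u₀ + 1) with hε
    have hεpos : ε ≠ 0 := div_ne_zero hzn (by positivity)
    obtain ⟨Nn, hNn⟩ := ENNReal.exists_inv_two_pow_lt
      (show ((ε : ℝ≥0) : ℝ≥0∞) ≠ 0 from ENNReal.coe_ne_zero.2 hεpos)
    have hevn : ∀ᶠ n in atTop, (b : ℝ≥0∞) ≤ Y n t := by
      rw [eventually_atTop]
      refine ⟨Nn, fun n hn => ?_⟩
      have hlamlt' : ((lam n : ℝ≥0) : ℝ≥0∞) < ((ε : ℝ≥0) : ℝ≥0∞) :=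
        lt_of_lt_of_le (hlamlt n)
          (le_trans (pow_le_pow_of_le_one zero_le (by norm_num) hn) hNn.le)
      have hlamε : lam n < ε := by exact_mod_cast hlamlt'
      have hgwgt : u₀ < ‖z t / ((lam n : ℝ≥0) : ℝ)‖₊ := by
        rw [nnnorm_div, NNReal.nnnorm_eq, lt_div_iff₀ (hlam n).1]
        calc u₀ * lam n < (u₀ + 1) * lam n :=
              mul_lt_mul_of_pos_right (lt_add_of_pos_right _ one_pos) (hlam n).1
          _ < ‖z t‖₊ := by
              rw [mul_comm]
              exact (lt_div_iff₀ (by positivity)).1 hlamε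
      obtain ⟨q, hq0, h1, h2⟩ := ENNReal.lt_iff_exists_rat_btwn.1
        (show ((u₀ : ℝ≥0) : ℝ≥0∞) < (‖z t / ((lam n : ℝ≥0) : ℝ)‖₊ : ℝ≥0∞) from
          ENNReal.coe_lt_coe.2 hgwgt)
      have hq2 : (q : ℝ).toNNReal < ‖z t / ((lam n : ℝ≥0) : ℝ)‖₊ := by exact_mod_cast h2
      have hq1 : u₀ ≤ (q : ℝ).toNNReal := by exact_mod_cast h1.le
      have hb : (b : ℝ≥0∞) < φ t ((q : ℝ).toNNReal) := hu₀ _ hq1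
      refine le_trans hb.le ?_
      exact le_iSup₂ (f := fun (q : ℚ)
        (_ : (q : ℝ).toNNReal < ‖z t / ((lam n : ℝ≥0) : ℝ)‖₊) => φ t ((q : ℝ).toNNReal)) q hq2
    exact Filter.le_liminf_of_le (h := hevn)
  have hZm : MeasurableSet {t | z t ≠ 0} := (hz (measurableSet_singleton 0)).compl
  have hind : ∫⁻ t, Set.indicator {t | z t ≠ 0} (fun _ => (⊤ : ℝ≥0∞)) t ∂μ ≤ 1 := by
    refine le_trans (le_trans (lintegral_mono_ae ?_) (lintegral_liminf_le (u := atTop) hYm)) ?_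
    · filter_upwards [hpt] with t ht
      by_cases hzt : z t ≠ 0
      · rw [Set.indicator_of_mem (show t ∈ {t | z t ≠ 0} from hzt) _, ht hzt]
      · rw [Set.indicator_of_notMem (show t ∉ {t | z t ≠ 0} from hzt) _]
        exact zero_le
    · exact le_trans liminf_le_limsup (limsup_le_of_le (h := Filter.Eventually.of_forall hYint))
  rw [lintegral_indicator hZm _, setLIntegral_const] at hind
  have hμ : μ {t | z t ≠ 0} = 0 := by
    by_contra hne
    rw [ENNReal.top_mul hne] at hind
    exact absurd hind (by simp)
  rw [ae_iff]
  simpa using hμ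

end MOaux

/-- If `D·φ₁⁻¹(t,u)·φ₀⁻¹(t,u) ≥ φ⁻¹(t,u)` a.e. and
`supp L^{φ₁} = Ω`, then `L^φ ⊂ L^{φ₀} ⊙ L^{φ₁}`: every `0 ≤ z ∈ L^φ` factors as
`z = z₀ z₁` with `‖z_i‖_{φ_i} ≤ C √(D ‖z‖_φ)`. -/
theorem memLphi_subset_product_of_inverse_ineq (μ : Measure Ω) [SigmaFinite μ]
    (φ φ₀ φ₁ : Ω → ℝ≥0 → ℝ≥0∞)
    (hφ : IsMusielakOrlicz μ φ) (hφ₀ : IsMusielakOrlicz μ φ₀)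
    (hφ₁ : IsMusielakOrlicz μ φ₁)
    (hsupp : ∀ᵐ t ∂μ, 0 < bFun φ₁ t)
    (D : ℝ≥0) (hD : 0 < D)
    (hinv : ∀ᵐ t ∂μ, ∀ u : ℝ≥0,
      rcInv φ t u ≤ (D : ℝ≥0∞) * rcInv φ₁ t u * rcInv φ₀ t u) :
    ∃ C : ℝ≥0∞, C < ∞ ∧
      ∀ z : Ω → ℝ, Measurable z → (∀ t, 0 ≤ z t) → MemLphi μ φ z →
        ∃ z₀ z₁ : Ω → ℝ, Measurable z₀ ∧ Measurable z₁ ∧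
          (∀ t, z t = z₀ t * z₁ t) ∧
          MemLphi μ φ₀ z₀ ∧ MemLphi μ φ₁ z₁ ∧
          luxNorm μ φ₀ z₀ ≤ C * ((D : ℝ≥0∞) * luxNorm μ φ z) ^ ((1 : ℝ) / 2) ∧
          luxNorm μ φ₁ z₁ ≤ C * ((D : ℝ≥0∞) * luxNorm μ φ z) ^ ((1 : ℝ) / 2) := by
  classical
  refine ⟨16, by simp, ?_⟩
  intro z hz hz0 hmem
  -- helpers
  have memhelp : ∀ (ψ : Ω → ℝ≥0 → ℝ≥0∞) (x : Ω → ℝ) (Λ : ℝ≥0), 0 < Λ →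
      modular μ ψ (fun t => x t / (Λ : ℝ)) ≠ ∞ → MemLphi μ ψ x := by
    intro ψ x Λ hΛ hmod
    refine ⟨Λ⁻¹, inv_pos.2 hΛ, ?_⟩
    have heq : (fun t => ((Λ⁻¹ : ℝ≥0) : ℝ) * x t) = fun t => x t / (Λ : ℝ) := by
      funext t
      rw [NNReal.coe_inv, inv_mul_eq_div]
    rw [heq]
    exact lt_top_iff_ne_top.2 hmod
  have luxhelp : ∀ (ψ : Ω → ℝ≥0 → ℝ≥0∞) (x : Ω → ℝ) (Λ : ℝ≥0), 0 < Λ →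
      modular μ ψ (fun t => x t / (Λ : ℝ)) ≤ 1 → luxNorm μ ψ x ≤ (Λ : ℝ≥0∞) :=
    fun ψ x Λ h1 h2 => iInf₂_le Λ ⟨h1, h2⟩
  rcases eq_or_ne (luxNorm μ φ z) 0 with hN0 | hNne
  · -- the degenerate case : `z = 0` a.e.
    have hzae : ∀ᵐ t ∂μ, z t = 0 := MOaux.ae_zero_of_luxNorm_zero μ φ hφ z hz hN0
    refine ⟨z, fun t => if z t = 0 then 0 else 1, hz,
      Measurable.ite (hz (measurableSet_singleton 0)) measurable_const measurable_const,
      ?_, ?_, ?_, ?_, ?_⟩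
    · intro t
      by_cases ht : z t = 0
      · simp [ht]
      · simp [ht]
    · refine ⟨1, one_pos, ?_⟩
      have h : ∀ᵐ t ∂μ, ((1 : ℝ≥0) : ℝ) * z t = 0 :=
        hzae.mono fun t ht => by rw [ht, mul_zero]
      rw [MOaux.modular_zero_of_ae_zero μ φ₀ hφ₀ h]
      exact zero_lt_top
    · refine ⟨1, one_pos, ?_⟩
      have h : ∀ᵐ t ∂μ, ((1 : ℝ≥0) : ℝ) * (if z t = 0 then (0:ℝ) else 1) = 0 :=
        hzae.mono fun t ht => by simp [ht]
      rw [MOaux.modular_zero_of_ae_zero μ φ₁ hφ₁ h]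
      exact zero_lt_top
    · rw [MOaux.luxNorm_zero_of_ae_zero μ φ₀ hφ₀ hzae]
      exact zero_le
    · have h : ∀ᵐ t ∂μ, (if z t = 0 then (0:ℝ) else 1) = 0 :=
        hzae.mono fun t ht => by simp [ht]
      rw [MOaux.luxNorm_zero_of_ae_zero μ φ₁ hφ₁ h]
      exact zero_le
  rcases eq_or_ne (luxNorm μ φ z) ∞ with hNtop | hNfin
  · -- infinite norm : the bound is trivial, use any admissible scale
    obtain ⟨lam₀, hlam₀, hmod⟩ := hmem
    have hMne : modular μ φ (fun t => z t / ((lam₀⁻¹ : ℝ≥0) : ℝ)) ≠ ∞ := by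
      have heq : (fun t => z t / ((lam₀⁻¹ : ℝ≥0) : ℝ)) = fun t => (lam₀ : ℝ) * z t := by
        funext t
        rw [NNReal.coe_inv, div_eq_mul_inv, inv_inv, mul_comm]
      rw [heq]
      exact hmod.ne
    obtain ⟨z₀, z₁, hm0, hm1, hfact, hmod₀, hmod₁⟩ :=
      MOaux.construction μ φ φ₀ φ₁ hφ hφ₀ hφ₁ hsupp D hD hinv lam₀⁻¹ (inv_pos.2 hlam₀)
        z hz hz0 hMne
    have hfin₀ : modular μ φ₀
        (fun t => z₀ t / ((8 * NNReal.sqrt (D * lam₀⁻¹) : ℝ≥0) : ℝ)) ≠ ∞ :=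
      (lt_of_le_of_lt hmod₀ (ENNReal.div_lt_top (ENNReal.add_ne_top.2 ⟨hMne, ENNReal.one_ne_top⟩) (by norm_num))).ne
    have hfin₁ : modular μ φ₁
        (fun t => z₁ t / ((8 * NNReal.sqrt (D * lam₀⁻¹) : ℝ≥0) : ℝ)) ≠ ∞ :=
      (lt_of_le_of_lt hmod₁ (ENNReal.div_lt_top (ENNReal.add_ne_top.2 ⟨hMne, ENNReal.one_ne_top⟩) (by norm_num))).ne
    have hΛpos : (0 : ℝ≥0) < 8 * NNReal.sqrt (D * lam₀⁻¹) :=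
      mul_pos (by norm_num) (NNReal.sqrt_pos.2 (mul_pos hD (inv_pos.2 hlam₀)))
    have hrhs : (16 : ℝ≥0∞) * ((D : ℝ≥0∞) * luxNorm μ φ z) ^ ((1 : ℝ) / 2) = ∞ := by
      rw [hNtop, ENNReal.mul_top (by exact_mod_cast hD.ne'), ENNReal.top_rpow_of_pos
        (by norm_num), ENNReal.mul_top (by norm_num)]
    refine ⟨z₀, z₁, hm0, hm1, hfact, memhelp φ₀ z₀ _ hΛpos hfin₀,
      memhelp φ₁ z₁ _ hΛpos hfin₁, ?_, ?_⟩ <;> rw [hrhs] <;> exact le_top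
  · -- main case : `0 < ‖z‖_φ < ∞`
    have hlt : luxNorm μ φ z < 2 * luxNorm μ φ z := by
      have := ENNReal.mul_lt_mul_right hNne hNfin ENNReal.one_lt_two
      simpa [mul_comm] using this
    nth_rewrite 1 [luxNorm] at hlt
    obtain ⟨lam, hl⟩ := iInf_lt_iff.1 hlt
    obtain ⟨⟨hlpos, hlmod⟩, hllt⟩ := iInf_lt_iff.1 hl
    obtain ⟨z₀, z₁, hm0, hm1, hfact, hmod₀, hmod₁⟩ :=
      MOaux.construction μ φ φ₀ φ₁ hφ hφ₀ hφ₁ hsupp D hD hinv lam hlpos z hz hz0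
        (lt_of_le_of_lt hlmod one_lt_top).ne
    have hone : (modular μ φ (fun t => z t / (lam : ℝ)) + 1) / 2 ≤ 1 := by
      calc (modular μ φ (fun t => z t / (lam : ℝ)) + 1) / 2 ≤ (1 + 1) / 2 :=
            ENNReal.div_le_div_right (add_le_add hlmod le_rfl) 2
        _ = 1 := by
            rw [one_add_one_eq_two]
            exact ENNReal.div_self (by norm_num) (by norm_num)
    have hΛpos : (0 : ℝ≥0) < 8 * NNReal.sqrt (D * lam) :=
      mul_pos (by norm_num) (NNReal.sqrt_pos.2 (mul_pos hD hlpos))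
    have hlux₀ : luxNorm μ φ₀ z₀ ≤ ((8 * NNReal.sqrt (D * lam) : ℝ≥0) : ℝ≥0∞) :=
      luxhelp φ₀ z₀ _ hΛpos (hmod₀.trans hone)
    have hlux₁ : luxNorm μ φ₁ z₁ ≤ ((8 * NNReal.sqrt (D * lam) : ℝ≥0) : ℝ≥0∞) :=
      luxhelp φ₁ z₁ _ hΛpos (hmod₁.trans hone)
    have hcoe : ((8 * NNReal.sqrt (D * lam) : ℝ≥0) : ℝ≥0∞) ≤
        16 * ((D : ℝ≥0∞) * luxNorm μ φ z) ^ ((1 : ℝ) / 2) := by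
      have h1 : ((8 * NNReal.sqrt (D * lam) : ℝ≥0) : ℝ≥0∞) =
          8 * (((D * lam : ℝ≥0)) : ℝ≥0∞) ^ ((1 : ℝ) / 2) := by
        rw [ENNReal.coe_mul, NNReal.sqrt_eq_rpow, ENNReal.coe_rpow_of_nonneg _ (by norm_num)]
        norm_num
      rw [h1]
      have h2 : (((D * lam : ℝ≥0)) : ℝ≥0∞) ≤ 2 * ((D : ℝ≥0∞) * luxNorm μ φ z) := by
        rw [ENNReal.coe_mul]
        calc (D : ℝ≥0∞) * (lam : ℝ≥0∞) ≤ (D : ℝ≥0∞) * (2 * luxNorm μ φ z) :=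
              mul_le_mul' le_rfl hllt.le
          _ = 2 * ((D : ℝ≥0∞) * luxNorm μ φ z) := by ring
      calc (8 : ℝ≥0∞) * (((D * lam : ℝ≥0)) : ℝ≥0∞) ^ ((1 : ℝ) / 2)
          ≤ 8 * (2 * ((D : ℝ≥0∞) * luxNorm μ φ z)) ^ ((1 : ℝ) / 2) :=
            mul_le_mul' le_rfl (ENNReal.rpow_le_rpow h2 (by norm_num))
        _ = 8 * ((2 : ℝ≥0∞) ^ ((1 : ℝ) / 2) * ((D : ℝ≥0∞) * luxNorm μ φ z) ^ ((1 : ℝ) / 2)) := by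
            rw [ENNReal.mul_rpow_of_nonneg _ _ (by norm_num)]
        _ ≤ 8 * ((2 : ℝ≥0∞) * ((D : ℝ≥0∞) * luxNorm μ φ z) ^ ((1 : ℝ) / 2)) := by
            refine mul_le_mul' le_rfl (mul_le_mul' ?_ le_rfl)
            calc (2 : ℝ≥0∞) ^ ((1 : ℝ) / 2) ≤ (2 : ℝ≥0∞) ^ (1 : ℝ) :=
                  ENNReal.rpow_le_rpow_of_exponent_le (by norm_num) (by norm_num)
              _ = 2 := ENNReal.rpow_one 2
        _ = 16 * ((D : ℝ≥0∞) * luxNorm μ φ z) ^ ((1 : ℝ) / 2) := by ring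
    have hfin₀ : modular μ φ₀
        (fun t => z₀ t / ((8 * NNReal.sqrt (D * lam) : ℝ≥0) : ℝ)) ≠ ∞ :=
      (lt_of_le_of_lt (hmod₀.trans hone) one_lt_top).ne
    have hfin₁ : modular μ φ₁
        (fun t => z₁ t / ((8 * NNReal.sqrt (D * lam) : ℝ≥0) : ℝ)) ≠ ∞ :=
      (lt_of_le_of_lt (hmod₁.trans hone) one_lt_top).ne
    exact ⟨z₀, z₁, hm0, hm1, hfact, memhelp φ₀ z₀ _ hΛpos hfin₀,
      memhelp φ₁ z₁ _ hΛpos hfin₁, hlux₀.trans hcoe, hlux₁.trans hcoe⟩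
end
end

section
/- If Musielak–Orlicz functions φ, φ₁ satisfy the two-sided equivalence φ₁^{-1}(t,u)·(φ⊖φ₁)^{-1}(t,u) ≈ φ^{-1}(t,u) (i.e., there are constants C₁, C₂ > 0 with C₁ φ₁^{-1}(φ⊖φ₁)^{-1} ≤ φ^{-1} ≤ C₂ φ₁^{-1}(φ⊖φ₁)^{-1} a.e.), and supp L^{φ₁} = Ω, then L^{φ₁} factorizes L^φ: L^{φ₁} ⊙ M(L^{φ₁}, L^φ) = L^φ. -/
open MeasureTheory ENNReal NNReal Filter

noncomputable section

variable {Ω : Type*} [MeasurableSpace Ω]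

set_option linter.unusedSectionVars false
set_option maxHeartbeats 1000000

section AuxLemmas

lemma IsYoung.mono' {f : ℝ≥0 → ℝ≥0∞} (hf : IsYoung f) : Monotone f := by
  intro u v huv
  rcases eq_or_ne v 0 with rfl | hv
  · obtain rfl : u = 0 := le_antisymm huv (zero_le)
    exact le_rfl
  · have hθ : u / v ≤ 1 := (div_le_one (pos_iff_ne_zero.mpr hv)).mpr huv
    have h := hf.2.2 v 0 (u / v) hθ
    simp only [mul_zero, add_zero, div_mul_cancel₀ _ hv, hf.1] at h
    refine h.trans ?_
    have hc : ((u / v : ℝ≥0) : ℝ≥0∞) ≤ 1 := by exact_mod_cast hθ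
    calc ((u / v : ℝ≥0) : ℝ≥0∞) * f v ≤ 1 * f v := mul_le_mul_left hc _
      _ = f v := one_mul _

lemma young_scale {f : ℝ≥0 → ℝ≥0∞} (hf : IsYoung f) {θ : ℝ≥0} (hθ : θ ≤ 1) (v : ℝ≥0) :
    f (θ * v) ≤ (θ : ℝ≥0∞) * f v := by
  have h := hf.2.2 v 0 θ hθ
  simpa [hf.1] using h

lemma rcInv_spec {φ : Ω → ℝ≥0 → ℝ≥0∞} {t : Ω} {u : ℝ≥0∞} {v : ℝ≥0}
    (h : (v : ℝ≥0∞) < rcInv φ t u) : φ t v ≤ u := by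
  by_contra hc
  push_neg at hc
  exact h.not_ge (iInf₂_le v hc)

lemma le_rcInv {φ : Ω → ℝ≥0 → ℝ≥0∞} {t : Ω} {u : ℝ≥0∞} {v : ℝ≥0}
    (hm : Monotone (φ t)) (h : φ t v ≤ u) : (v : ℝ≥0∞) ≤ rcInv φ t u := by
  refine le_iInf₂ fun w hw => ?_
  by_contra hc
  push_neg at hc
  have hwv : w < v := by exact_mod_cast hc
  exact hw.not_ge ((hm hwv.le).trans h)

lemma rcInv_mono {φ : Ω → ℝ≥0 → ℝ≥0∞} (t : Ω) {u₁ u₂ : ℝ≥0∞} (h : u₁ ≤ u₂) :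
    rcInv φ t u₁ ≤ rcInv φ t u₂ := by
  unfold rcInv
  refine le_iInf₂ fun v hv => iInf₂_le v ?_
  exact lt_of_le_of_lt h hv

lemma nnnorm_nnreal_mul (r : ℝ≥0) (b : ℝ) : ‖(r : ℝ) * b‖₊ = r * ‖b‖₊ := by
  rw [nnnorm_mul]
  congr 1
  ext
  simp [Real.norm_eq_abs, abs_of_nonneg r.coe_nonneg]

end AuxLemmas

/-- If `φ₁⁻¹·(φ⊖φ₁)⁻¹ ≈ φ⁻¹` (two-sided estimates with
constants) and `supp L^{φ₁} = Ω`, then `L^{φ₁}` factorizes `L^φ`: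
`L^{φ₁} ⊙ M(L^{φ₁}, L^φ) = L^φ`. -/
theorem factorization_of_inverse_equivalence (μ : Measure Ω) [SigmaFinite μ]
    [MeasurableSingletonClass Ω] (φ φ₁ : Ω → ℝ≥0 → ℝ≥0∞)
    (hφ : IsMusielakOrlicz μ φ) (hφ₁ : IsMusielakOrlicz μ φ₁)
    (hsupp : ∀ᵐ t ∂μ, 0 < bFun φ₁ t)
    (C₁ C₂ : ℝ≥0∞) (hC₁ : 0 < C₁) (hC₂ : C₂ < ∞)
    (h1 : ∀ᵐ t ∂μ, ∀ u : ℝ≥0,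
      C₁ * rcInv φ₁ t u * rcInv (ominusFull μ φ φ₁) t u ≤ rcInv φ t u)
    (h2 : ∀ᵐ t ∂μ, ∀ u : ℝ≥0,
      rcInv φ t u ≤ C₂ * rcInv φ₁ t u * rcInv (ominusFull μ φ φ₁) t u) :
    ∀ z : Ω → ℝ, Measurable z →
      (MemLphi μ φ z ↔
        ∃ x y : Ω → ℝ, Measurable x ∧ Measurable y ∧
          MemLphi μ φ₁ x ∧ MemMul μ φ₁ φ y ∧ ∀ t, z t = x t * y t) := by
  intro z hz
  constructor
  case mpr =>
    rintro ⟨x, y, hx, hy, hx1, hyM, hzeq⟩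
    have hzf : z = fun t => x t * y t := funext hzeq
    rw [hzf]
    exact hyM x hx hx1
  rintro ⟨lam, hlam, hK⟩
  classical
  set Ψ : Ω → ℝ≥0 → ℝ≥0∞ := ominusFull μ φ φ₁ with hΨdef
  set lam0 : ℝ≥0 := lam / 2 with hlam0def
  have hlam0 : 0 < lam0 := div_pos hlam (by norm_num)
  have hKu : ∫⁻ t, φ t ‖(lam : ℝ) * z t‖₊ ∂μ < ∞ := hK
  -- measurable majorant of `φ t (lam0 ‖z t‖)`
  set w : Ω → ℝ≥0∞ := fun t =>
      if z t = 0 then 0 else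
        ⨅ (q : ℚ), (if lam0 * ‖z t‖₊ < Real.toNNReal q then φ t (Real.toNNReal q) else ∞)
    with hwdef
  have hz0meas : MeasurableSet {t | z t = 0} := hz (measurableSet_singleton 0)
  have hwmeas : Measurable w := by
    refine Measurable.ite hz0meas measurable_const ?_
    refine Measurable.iInf fun q => ?_
    refine Measurable.ite ?_ (hφ.2 _) measurable_const
    exact measurableSet_lt (hz.nnnorm.const_mul lam0) measurable_const
  have hw_lb : ∀ᵐ t ∂μ, φ t (lam0 * ‖z t‖₊) ≤ w t := by
    filter_upwards [hφ.1] with t hY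
    by_cases hzt : z t = 0
    · simp [hwdef, hzt, hY.1]
    · simp only [hwdef, if_neg hzt]
      refine le_iInf fun q => ?_
      by_cases hc : lam0 * ‖z t‖₊ < Real.toNNReal q
      · rw [if_pos hc]; exact hY.mono' hc.le
      · rw [if_neg hc]; exact le_top
  have hw_ub : ∀ᵐ t ∂μ, w t ≤ φ t (lam * ‖z t‖₊) := by
    filter_upwards [hφ.1] with t hY
    by_cases hzt : z t = 0
    · simp [hwdef, hzt]
    · have hlt : lam0 * ‖z t‖₊ < lam * ‖z t‖₊ := by
        have h1 : lam0 < lam := by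
          rw [hlam0def]; exact NNReal.half_lt_self hlam.ne'
        exact mul_lt_mul_of_pos_right h1 (pos_iff_ne_zero.mpr (nnnorm_ne_zero_iff.mpr hzt))
      obtain ⟨q, hq1, hq2⟩ := exists_rat_btwn (NNReal.coe_lt_coe.mpr hlt)
      have hcond : lam0 * ‖z t‖₊ < Real.toNNReal q := Real.lt_toNNReal_iff_coe_lt.mpr hq1
      have hle : Real.toNNReal q ≤ lam * ‖z t‖₊ := Real.toNNReal_le_iff_le_coe.mpr hq2.le
      simp only [hwdef, if_neg hzt]
      refine (iInf_le _ q).trans ?_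
      rw [if_pos hcond]
      exact hY.mono' hle
  have hwint : ∫⁻ t, w t ∂μ < ∞ := by
    refine lt_of_le_of_lt (lintegral_mono_ae ?_) hKu
    filter_upwards [hw_ub] with t ht
    rw [nnnorm_nnreal_mul]
    exact ht
  have hwfin : ∀ᵐ t ∂μ, w t < ∞ := ae_lt_top hwmeas hwint.ne
  -- the function A t = rcInv φ₁ t (w t), defined by a measurable formula
  set A : Ω → ℝ≥0∞ := fun t =>
      ⨅ (q : ℚ), (if w t < φ₁ t (Real.toNNReal q) then ((Real.toNNReal q : ℝ≥0) : ℝ≥0∞) else ∞)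
    with hAdef
  have hAmeas : Measurable A := by
    refine Measurable.iInf fun q => ?_
    exact Measurable.ite (measurableSet_lt hwmeas (hφ₁.2 _)) measurable_const measurable_const
  have hAeq : ∀ᵐ t ∂μ, A t = rcInv φ₁ t (w t) := by
    filter_upwards [hφ₁.1] with t hY
    refine le_antisymm ?_ ?_
    · unfold rcInv
      refine le_iInf₂ fun v hv => ?_
      refine ENNReal.le_of_forall_pos_le_add fun ε hε _ => ?_
      obtain ⟨q, hq1, hq2⟩ := exists_rat_btwn (NNReal.coe_lt_coe.mpr (lt_add_of_pos_right v hε))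
      have hvq : v < Real.toNNReal q := Real.lt_toNNReal_iff_coe_lt.mpr hq1
      have hqle : Real.toNNReal q ≤ v + ε := Real.toNNReal_le_iff_le_coe.mpr hq2.le
      have hcond : w t < φ₁ t (Real.toNNReal q) := lt_of_lt_of_le hv (hY.mono' hvq.le)
      have hAle : A t ≤ ((Real.toNNReal q : ℝ≥0) : ℝ≥0∞) := by
        simp only [hAdef]
        refine (iInf_le _ q).trans ?_
        rw [if_pos hcond]
      refine hAle.trans ?_
      calc ((Real.toNNReal q : ℝ≥0) : ℝ≥0∞) ≤ ((v + ε : ℝ≥0) : ℝ≥0∞) := ENNReal.coe_le_coe.mpr hqle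
        _ = (v : ℝ≥0∞) + ε := by rw [ENNReal.coe_add]
    · simp only [hAdef]
      refine le_iInf fun q => ?_
      by_cases hc : w t < φ₁ t (Real.toNNReal q)
      · rw [if_pos hc]
        unfold rcInv
        exact iInf₂_le ((q : ℝ).toNNReal) hc
      · rw [if_neg hc]; exact le_top
  have hAfin : ∀ᵐ t ∂μ, A t < ∞ := by
    filter_upwards [hAeq, hwfin, hφ₁.1] with t hA hwf hY
    rw [hA]
    obtain ⟨v, hv⟩ := (hY.2.1.eventually (Ioi_mem_nhds hwf)).exists
    refine lt_of_le_of_lt ?_ (coe_lt_top (r := v))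
    unfold rcInv
    exact iInf₂_le v hv
  -- the small measurable function used on {z = 0}
  set Dn : ℕ → Set Ω := disjointed (spanningSets μ) with hDdef
  have hDmeas : ∀ n, MeasurableSet (Dn n) :=
    MeasurableSet.disjointed fun n => measurableSet_spanningSets μ n
  set cE : ℕ → ℝ≥0∞ := fun n => (2 : ℝ≥0∞)⁻¹ ^ n * (μ (spanningSets μ n) + 1)⁻¹ with hcEdef
  have hμfin : ∀ n, μ (spanningSets μ n) + 1 ≠ ∞ := fun n =>
    ENNReal.add_ne_top.mpr ⟨(measure_spanningSets_lt_top μ n).ne, one_ne_top⟩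
  have hcEpos : ∀ n, 0 < cE n := by
    intro n
    refine ENNReal.mul_pos ?_ ?_
    · exact pow_ne_zero n (ENNReal.inv_ne_zero.mpr ENNReal.ofNat_ne_top)
    · exact ENNReal.inv_ne_zero.mpr (hμfin n)
  set cf : Ω → ℝ≥0∞ := fun t => ∑' n, (Dn n).indicator (fun _ => cE n) t with hcfdef
  have hcfmeas : Measurable cf :=
    Measurable.ennreal_tsum fun n => measurable_const.indicator (hDmeas n)
  have hcfpos : ∀ t, 0 < cf t := by
    intro t
    have ht : t ∈ ⋃ n, Dn n := by
      rw [hDdef, iUnion_disjointed, iUnion_spanningSets]; trivial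
    obtain ⟨n, hn⟩ := Set.mem_iUnion.mp ht
    refine lt_of_lt_of_le (hcEpos n) ?_
    refine le_trans ?_ (ENNReal.le_tsum n)
    rw [Set.indicator_of_mem hn]
  have hcfint : ∫⁻ t, cf t ∂μ < ∞ := by
    have heq : ∫⁻ t, cf t ∂μ = ∑' n, ∫⁻ t, (Dn n).indicator (fun _ => cE n) t ∂μ := by
      simp only [hcfdef]
      exact lintegral_tsum fun n => (measurable_const.indicator (hDmeas n)).aemeasurable
    rw [heq]
    have hbound : ∀ n, ∫⁻ t, (Dn n).indicator (fun _ => cE n) t ∂μ ≤ (2 : ℝ≥0∞)⁻¹ ^ n := by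
      intro n
      rw [lintegral_indicator_const (hDmeas n)]
      calc cE n * μ (Dn n) ≤ cE n * (μ (spanningSets μ n) + 1) :=
            mul_le_mul_right (le_trans (measure_mono (disjointed_subset _ n)) (le_add_right le_rfl)) _
        _ = (2 : ℝ≥0∞)⁻¹ ^ n * ((μ (spanningSets μ n) + 1)⁻¹ * (μ (spanningSets μ n) + 1)) := by
            rw [hcEdef, mul_assoc]
        _ = (2 : ℝ≥0∞)⁻¹ ^ n := by
            rw [ENNReal.inv_mul_cancel (by simp) (hμfin n), mul_one]
    calc ∑' n, ∫⁻ t, (Dn n).indicator (fun _ => cE n) t ∂μ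
        ≤ ∑' n : ℕ, (2 : ℝ≥0∞)⁻¹ ^ n := ENNReal.tsum_le_tsum hbound
      _ = (1 - 2⁻¹)⁻¹ := ENNReal.tsum_geometric _
      _ < ∞ := by rw [ENNReal.one_sub_inv_two]; simp
  set S : Ω → ℝ≥0∞ := fun t =>
      ⨆ n : ℕ, (if φ₁ t ((n : ℝ≥0) + 1)⁻¹ ≤ cf t then ((((n : ℝ≥0) + 1)⁻¹ : ℝ≥0) : ℝ≥0∞) else 0)
    with hSdef
  have hSmeas : Measurable S := Measurable.iSup fun n =>
    Measurable.ite (measurableSet_le (hφ₁.2 _) hcfmeas) measurable_const measurable_const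
  have hSle : ∀ t, S t ≤ 1 := by
    intro t
    simp only [hSdef]
    refine iSup_le fun n => ?_
    split
    · refine ENNReal.coe_le_one_iff.mpr ?_
      have h1 : (1 : ℝ≥0) ≤ (n : ℝ≥0) + 1 := le_add_self
      exact inv_le_one_of_one_le₀ h1
    · exact zero_le_one
  have hSpos : ∀ᵐ t ∂μ, 0 < S t := by
    filter_upwards [hφ₁.1, hsupp] with t hY hb
    have hv₀ : ∃ v : ℝ≥0, 0 < v ∧ φ₁ t v < ∞ := by
      by_contra hcon
      push_neg at hcon
      have hb0 : bFun φ₁ t ≤ 0 := by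
        refine ENNReal.le_of_forall_pos_le_add fun ε hε _ => ?_
        have hinf : φ₁ t ε = ∞ := top_le_iff.mp (hcon ε hε)
        have hble : bFun φ₁ t ≤ (ε : ℝ≥0∞) := by
          unfold bFun
          exact iInf₂_le ε hinf
        calc bFun φ₁ t ≤ (ε : ℝ≥0∞) := hble
          _ = 0 + ε := (zero_add _).symm
      exact absurd (le_antisymm hb0 (zero_le)) hb.ne'
    obtain ⟨v, hv0, hvfin⟩ := hv₀
    have hθ : ∃ θ : ℝ≥0, 0 < θ ∧ θ ≤ 1 ∧ φ₁ t (θ * v) ≤ cf t := by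
      rcases eq_or_ne (φ₁ t v) 0 with h0 | h0
      · refine ⟨1, one_pos, le_rfl, ?_⟩
        rw [one_mul, h0]
        exact zero_le
      · set τ : ℝ≥0∞ := min 1 (cf t / (2 * φ₁ t v)) with hτdef
        have h2fin : 2 * φ₁ t v ≠ ∞ := ENNReal.mul_ne_top (by simp) hvfin.ne
        have hτpos : 0 < τ := lt_min one_pos (ENNReal.div_pos (hcfpos t).ne' h2fin)
        have hτ1 : τ ≤ 1 := min_le_left _ _
        have hτfin : τ ≠ ∞ := (hτ1.trans_lt one_lt_top).ne
        have hθ1' : τ.toNNReal ≤ 1 := by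
          have h := ENNReal.toNNReal_mono one_ne_top hτ1
          simpa using h
        refine ⟨τ.toNNReal, ENNReal.toNNReal_pos hτpos.ne' hτfin, hθ1', ?_⟩
        have hsc := young_scale hY hθ1' v
        have hcoe : (τ.toNNReal : ℝ≥0∞) = τ := ENNReal.coe_toNNReal hτfin
        refine hsc.trans ?_
        rw [hcoe]
        calc τ * φ₁ t v ≤ (cf t / (2 * φ₁ t v)) * φ₁ t v := mul_le_mul_left (min_le_right _ _) _
          _ = cf t * 2⁻¹ * ((φ₁ t v)⁻¹ * φ₁ t v) := by
              rw [div_eq_mul_inv, ENNReal.mul_inv (Or.inl two_ne_zero) (Or.inl ENNReal.ofNat_ne_top)]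
              ring
          _ = cf t * 2⁻¹ := by rw [ENNReal.inv_mul_cancel h0 hvfin.ne, mul_one]
          _ ≤ cf t * 1 := mul_le_mul_right (ENNReal.inv_le_one.mpr one_le_two) _
          _ = cf t := mul_one _
    obtain ⟨θ, hθ0, hθ1, hθc⟩ := hθ
    obtain ⟨n, hn⟩ := exists_nat_ge ((θ * v)⁻¹ : ℝ≥0)
    have hτv0 : θ * v ≠ 0 := (mul_pos hθ0 hv0).ne'
    have hnv : ((n : ℝ≥0) + 1)⁻¹ ≤ θ * v := by
      have hh : (θ * v)⁻¹ ≤ (n : ℝ≥0) + 1 := hn.trans (le_add_right le_rfl)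
      calc ((n : ℝ≥0) + 1)⁻¹ ≤ ((θ * v)⁻¹)⁻¹ :=
            inv_anti₀ (pos_iff_ne_zero.mpr (inv_ne_zero hτv0)) hh
        _ = θ * v := inv_inv _
    have hφn : φ₁ t ((n : ℝ≥0) + 1)⁻¹ ≤ cf t := (hY.mono' hnv).trans hθc
    have hle : ((((n : ℝ≥0) + 1)⁻¹ : ℝ≥0) : ℝ≥0∞) ≤ S t := by
      simp only [hSdef]
      refine le_trans ?_ (le_iSup _ n)
      rw [if_pos hφn]
    refine lt_of_lt_of_le ?_ hle
    exact ENNReal.coe_pos.mpr (by positivity)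
  -- the factor x
  set X : Ω → ℝ≥0∞ := fun t => if z t = 0 then 2⁻¹ * S t else A t / 2 with hXdef
  have hXmeas : Measurable X := Measurable.ite hz0meas (hSmeas.const_mul _) (hAmeas.div_const _)
  set x : Ω → ℝ := fun t => if X t = 0 ∨ X t = ∞ then 1 else (X t).toReal with hxdef
  have hxmeas : Measurable x := by
    have hset : MeasurableSet {t | X t = 0 ∨ X t = ∞} := by
      have he : {t | X t = 0 ∨ X t = ∞} = X ⁻¹' {0} ∪ X ⁻¹' {∞} := by
        ext t; simp [Set.mem_union, Set.mem_preimage]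
      rw [he]
      exact (hXmeas (measurableSet_singleton 0)).union (hXmeas (measurableSet_singleton ∞))
    exact Measurable.ite hset measurable_const hXmeas.ennreal_toReal
  have hxpos : ∀ t, 0 < x t := by
    intro t
    simp only [hxdef]
    split
    · exact one_pos
    · next h =>
        push_neg at h
        exact ENNReal.toReal_pos h.1 h.2
  have hxcoe : ∀ t, X t ≠ 0 → X t ≠ ∞ → ((‖x t‖₊ : ℝ≥0∞)) = X t := by
    intro t h0 htop
    have hxv : x t = (X t).toReal := by
      simp only [hxdef]
      rw [if_neg (by push_neg; exact ⟨h0, htop⟩)]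
    rw [hxv, show ((‖(X t).toReal‖₊ : ℝ≥0∞)) = ‖(X t).toReal‖ₑ from rfl, Real.enorm_eq_ofReal ENNReal.toReal_nonneg, ENNReal.ofReal_toReal htop]
  set y : Ω → ℝ := fun t => z t / x t with hydef
  have hymeas : Measurable y := hz.div hxmeas
  have hzxy : ∀ t, z t = x t * y t := by
    intro t
    simp only [hydef]
    rw [mul_comm]
    exact (div_mul_cancel₀ _ (hxpos t).ne').symm
  -- the constant kap
  set Cm : ℝ≥0 := max C₂.toNNReal 1 with hCmdef
  have hCm1 : (1 : ℝ≥0) ≤ Cm := le_max_right _ _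
  have hCm0 : Cm ≠ 0 := (one_pos.trans_le hCm1).ne'
  have hC₂Cm : C₂ ≤ (Cm : ℝ≥0∞) := by
    conv_lhs => rw [← ENNReal.coe_toNNReal hC₂.ne]
    exact ENNReal.coe_le_coe.mpr (le_max_left _ _)
  set kap : ℝ≥0 := lam0 * (4 * Cm)⁻¹ with hκdef
  have h4Cm : (0 : ℝ≥0) < 4 * Cm := mul_pos (by norm_num) (one_pos.trans_le hCm1)
  have hκpos : 0 < kap := mul_pos hlam0 (inv_pos.mpr h4Cm)
  -- the main pointwise estimates on {z ≠ 0}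
  have hmain : ∀ᵐ t ∂μ, z t ≠ 0 →
      ((‖x t‖₊ : ℝ≥0∞) < rcInv φ₁ t (w t) ∧
        ((kap * ‖y t‖₊ : ℝ≥0) : ℝ≥0∞) < rcInv Ψ t (w t)) := by
    filter_upwards [hAeq, hAfin, hwfin, hw_lb, h2, hφ.1] with t hAe hAf hwf hwlb h2t hYφ
    intro hzt
    have hznn : ‖z t‖₊ ≠ 0 := nnnorm_ne_zero_iff.mpr hzt
    have hch1 : ((lam0 * ‖z t‖₊ : ℝ≥0) : ℝ≥0∞) ≤ rcInv φ t (w t) := le_rcInv hYφ.mono' hwlb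
    have h2' := h2t (w t).toNNReal
    rw [ENNReal.coe_toNNReal hwf.ne] at h2'
    have hchain : ((lam0 * ‖z t‖₊ : ℝ≥0) : ℝ≥0∞) ≤
        C₂ * rcInv φ₁ t (w t) * rcInv Ψ t (w t) := hch1.trans h2'
    set At := rcInv φ₁ t (w t) with hAt
    set Bt := rcInv Ψ t (w t) with hBt
    have hlz0 : ((lam0 * ‖z t‖₊ : ℝ≥0) : ℝ≥0∞) ≠ 0 :=
      ENNReal.coe_ne_zero.mpr (mul_ne_zero hlam0.ne' hznn)
    have hA0 : At ≠ 0 := by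
      rintro h
      rw [h, mul_zero, zero_mul] at hchain
      exact hlz0 (le_antisymm hchain (zero_le))
    have hB0 : Bt ≠ 0 := by
      rintro h
      rw [h, mul_zero] at hchain
      exact hlz0 (le_antisymm hchain (zero_le))
    have hAfin' : At ≠ ∞ := by
      rw [← hAe]; exact hAf.ne
    have hXt : X t = At / 2 := by
      simp only [hXdef]
      rw [if_neg hzt, hAe]
    have hX0 : X t ≠ 0 := by
      rw [hXt]
      simp [ENNReal.div_eq_zero_iff, hA0]
    have hXtop : X t ≠ ∞ := by
      rw [hXt]
      exact (ENNReal.div_lt_top hAfin' (by norm_num)).ne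
    have hxc := hxcoe t hX0 hXtop
    constructor
    · rw [hxc, hXt]
      exact ENNReal.half_lt_self hA0 hAfin'
    · have hynn : ‖y t‖₊ = ‖z t‖₊ / ‖x t‖₊ := by
        simp only [hydef]
        exact nnnorm_div _ _
      have hxnn0 : ‖x t‖₊ ≠ 0 := nnnorm_ne_zero_iff.mpr (hxpos t).ne'
      have hcoe2 : ((kap * ‖y t‖₊ : ℝ≥0) : ℝ≥0∞) = ((kap * ‖z t‖₊ : ℝ≥0) : ℝ≥0∞) / X t := by
        rw [hynn, ← mul_div_assoc, ENNReal.coe_div hxnn0, hxc]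
      rw [hcoe2, hXt]
      have hA2_0 : At / 2 ≠ 0 := by simp [ENNReal.div_eq_zero_iff, hA0]
      have hA2_top : At / 2 ≠ ∞ := (ENNReal.div_lt_top hAfin' (by norm_num)).ne
      rw [ENNReal.div_lt_iff (Or.inl hA2_0) (Or.inl hA2_top)]
      rcases eq_or_ne Bt ∞ with hBtop | hBtop
      · rw [hBtop, ENNReal.top_mul hA2_0]
        exact coe_lt_top
      · have hkz : ((kap * ‖z t‖₊ : ℝ≥0) : ℝ≥0∞) ≤ At * Bt / 4 := by
          have e1 : ((kap * ‖z t‖₊ : ℝ≥0) : ℝ≥0∞) =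
              ((lam0 * ‖z t‖₊ : ℝ≥0) : ℝ≥0∞) * ((4 * Cm : ℝ≥0) : ℝ≥0∞)⁻¹ := by
            rw [← ENNReal.coe_inv h4Cm.ne', ← ENNReal.coe_mul]
            congr 1
            rw [hκdef]; ring
          rw [e1]
          have hc4 : ((4 * Cm : ℝ≥0) : ℝ≥0∞) = 4 * (Cm : ℝ≥0∞) := by
            push_cast; ring
          calc ((lam0 * ‖z t‖₊ : ℝ≥0) : ℝ≥0∞) * ((4 * Cm : ℝ≥0) : ℝ≥0∞)⁻¹
              ≤ (C₂ * At * Bt) * ((4 * Cm : ℝ≥0) : ℝ≥0∞)⁻¹ := mul_le_mul_left hchain _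
            _ ≤ ((Cm : ℝ≥0∞) * At * Bt) * ((4 * Cm : ℝ≥0) : ℝ≥0∞)⁻¹ :=
                mul_le_mul_left (mul_le_mul_left (mul_le_mul_left hC₂Cm _) _) _
            _ = At * Bt * ((Cm : ℝ≥0∞) * ((4 : ℝ≥0∞) * (Cm : ℝ≥0∞))⁻¹) := by
                rw [hc4]; ring
            _ = At * Bt * (4 : ℝ≥0∞)⁻¹ := by
                congr 1
                rw [ENNReal.mul_inv (Or.inl (by norm_num)) (Or.inl (by simp))]
                calc (Cm : ℝ≥0∞) * ((4 : ℝ≥0∞)⁻¹ * (Cm : ℝ≥0∞)⁻¹)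
                    = ((Cm : ℝ≥0∞) * (Cm : ℝ≥0∞)⁻¹) * (4 : ℝ≥0∞)⁻¹ := by ring
                  _ = (4 : ℝ≥0∞)⁻¹ := by
                      rw [ENNReal.mul_inv_cancel (by exact_mod_cast hCm0) coe_ne_top, one_mul]
            _ = At * Bt / 4 := by rw [div_eq_mul_inv]
        have hlt2 : At * Bt / 4 < Bt * (At / 2) := by
          have hAB0 : At * Bt ≠ 0 := mul_ne_zero hA0 hB0
          have hABtop : At * Bt ≠ ∞ := ENNReal.mul_ne_top hAfin' hBtop
          have e2 : Bt * (At / 2) = At * Bt * 2⁻¹ := by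
            rw [div_eq_mul_inv]; ring
          have e4 : At * Bt / 4 = At * Bt * 4⁻¹ := by rw [div_eq_mul_inv]
          rw [e2, e4, ENNReal.mul_lt_mul_iff_right hAB0 hABtop, ENNReal.inv_lt_inv]
          norm_num
        exact lt_of_le_of_lt hkz hlt2
  -- modular estimate for x
  have hxmod : ∀ᵐ t ∂μ, φ₁ t ‖x t‖₊ ≤ w t + cf t := by
    filter_upwards [hmain, hSpos, hφ₁.1] with t hm hS hY
    by_cases hzt : z t = 0
    · have hS1 : S t ≤ 1 := hSle t
      have hXt : X t = 2⁻¹ * S t := by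
        simp only [hXdef]; rw [if_pos hzt]
      have hX0 : X t ≠ 0 := by
        rw [hXt]; exact (ENNReal.mul_pos (by simp) hS.ne').ne'
      have hXtop : X t ≠ ∞ := by
        rw [hXt]
        exact (ENNReal.mul_lt_top (by simp) (hS1.trans_lt one_lt_top)).ne
      have hxc := hxcoe t hX0 hXtop
      have hXS : X t < S t := by
        rw [hXt]
        calc 2⁻¹ * S t = S t / 2 := by rw [div_eq_mul_inv, mul_comm]
          _ < S t := ENNReal.half_lt_self hS.ne' (hS1.trans_lt one_lt_top).ne
      have hXS' : X t < ⨆ n : ℕ,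
          (if φ₁ t ((n : ℝ≥0) + 1)⁻¹ ≤ cf t then ((((n : ℝ≥0) + 1)⁻¹ : ℝ≥0) : ℝ≥0∞) else 0) := by
        rw [hSdef] at hXS
        exact hXS
      obtain ⟨n, hn⟩ := lt_iSup_iff.mp hXS'
      by_cases hc : φ₁ t ((n : ℝ≥0) + 1)⁻¹ ≤ cf t
      case neg =>
        rw [if_neg hc] at hn
        exact absurd hn (not_lt.mpr (zero_le))
      rw [if_pos hc] at hn
      have hxlt : ‖x t‖₊ ≤ ((n : ℝ≥0) + 1)⁻¹ := by
        have := hxc ▸ hn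
        exact_mod_cast this.le
      calc φ₁ t ‖x t‖₊ ≤ φ₁ t ((n : ℝ≥0) + 1)⁻¹ := hY.mono' hxlt
        _ ≤ cf t := hc
        _ ≤ w t + cf t := le_add_self
    · have hφ1 : φ₁ t ‖x t‖₊ ≤ w t := rcInv_spec (hm hzt).1
      exact hφ1.trans (le_add_right le_rfl)
  have hxmem : MemLphi μ φ₁ x := by
    refine ⟨1, one_pos, ?_⟩
    have hgoal : ∫⁻ t, φ₁ t ‖x t‖₊ ∂μ < ∞ := by
      calc ∫⁻ t, φ₁ t ‖x t‖₊ ∂μ ≤ ∫⁻ t, (w t + cf t) ∂μ := lintegral_mono_ae hxmod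
        _ = (∫⁻ t, w t ∂μ) + ∫⁻ t, cf t ∂μ := lintegral_add_left hwmeas _
        _ < ∞ := ENNReal.add_lt_top.mpr ⟨hwint, hcfint⟩
    have hcongr : modular μ φ₁ (fun t => ((1 : ℝ≥0) : ℝ) * x t) = ∫⁻ t, φ₁ t ‖x t‖₊ ∂μ := by
      refine lintegral_congr fun t => ?_
      norm_num
    rw [hcongr]
    exact hgoal
  -- the multiplier property of y
  have hymul : MemMul μ φ₁ φ y := by
    rintro x' hx' ⟨l', hl', hK₁⟩
    have hK₁' : ∫⁻ t, φ₁ t ‖(l' : ℝ) * x' t‖₊ ∂μ < ∞ := hK₁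
    set C₁' : ℝ≥0 := (min C₁ 1).toNNReal with hC₁'def
    have hminfin : min C₁ 1 ≠ ∞ := ((min_le_right _ _).trans_lt one_lt_top).ne
    have hC₁'pos : 0 < C₁' := ENNReal.toNNReal_pos (lt_min hC₁ one_pos).ne' hminfin
    have hC₁'le : (C₁' : ℝ≥0∞) ≤ C₁ := by
      rw [hC₁'def, ENNReal.coe_toNNReal hminfin]
      exact min_le_left _ _
    set ρ : ℝ≥0 := C₁' * l' * kap * 2⁻¹ with hρdef
    have hρpos : 0 < ρ :=
      mul_pos (mul_pos (mul_pos hC₁'pos hl') hκpos) (inv_pos.mpr two_pos)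
    refine ⟨ρ, hρpos, ?_⟩
    have hpt : ∀ᵐ t ∂μ, φ t ‖(ρ : ℝ) * (x' t * y t)‖₊ ≤ w t + φ₁ t ‖(l' : ℝ) * x' t‖₊ := by
      filter_upwards [hmain, hwfin, h1, hφ.1, hφ₁.1] with t hm hwf h1t hYφ hYφ₁
      rw [nnnorm_nnreal_mul, nnnorm_nnreal_mul, nnnorm_mul]
      by_cases hzt : z t = 0
      · have hy0 : y t = 0 := by
          simp only [hydef]
          rw [hzt, zero_div]
        have hz0' : ρ * (‖x' t‖₊ * ‖y t‖₊) = 0 := by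
          rw [hy0]; simp
        rw [hz0', hYφ.1]
        exact zero_le
      · obtain ⟨-, hylt⟩ := hm hzt
        set a : ℝ≥0 := l' * ‖x' t‖₊ with hadef
        rcases eq_or_ne (φ₁ t a) ∞ with hpa | hpa
        · rw [hpa]
          simp
        · set v₀ : ℝ≥0∞ := w t + φ₁ t a with hv₀def
          have hv₀fin : v₀ ≠ ∞ := by
            rw [hv₀def]; exact ENNReal.add_ne_top.mpr ⟨hwf.ne, hpa⟩
          have h1v := h1t v₀.toNNReal
          rw [ENNReal.coe_toNNReal hv₀fin] at h1v
          have hale : (a : ℝ≥0∞) ≤ rcInv φ₁ t v₀ :=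
            le_rcInv hYφ₁.mono' (by rw [hv₀def]; exact le_add_self)
          have hyle : ((kap * ‖y t‖₊ : ℝ≥0) : ℝ≥0∞) ≤ rcInv Ψ t v₀ :=
            hylt.le.trans (rcInv_mono t (by rw [hv₀def]; exact le_add_right le_rfl))
          have hprod : ((a * (kap * ‖y t‖₊) : ℝ≥0) : ℝ≥0∞) ≤ rcInv φ₁ t v₀ * rcInv Ψ t v₀ := by
            rw [ENNReal.coe_mul]
            exact mul_le_mul' hale hyle
          have hkey : ((C₁' * (a * (kap * ‖y t‖₊)) : ℝ≥0) : ℝ≥0∞) ≤ rcInv φ t v₀ := by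
            rw [ENNReal.coe_mul]
            calc (C₁' : ℝ≥0∞) * ((a * (kap * ‖y t‖₊) : ℝ≥0) : ℝ≥0∞)
                ≤ C₁ * (rcInv φ₁ t v₀ * rcInv Ψ t v₀) := mul_le_mul' hC₁'le hprod
              _ = C₁ * rcInv φ₁ t v₀ * rcInv Ψ t v₀ := by rw [mul_assoc]
              _ ≤ rcInv φ t v₀ := h1v
          have harg : ρ * (‖x' t‖₊ * ‖y t‖₊) * 2 = C₁' * (a * (kap * ‖y t‖₊)) := by
            have h2 : (2 : ℝ≥0)⁻¹ * 2 = 1 := inv_mul_cancel₀ two_ne_zero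
            calc ρ * (‖x' t‖₊ * ‖y t‖₊) * 2
                = C₁' * (a * (kap * ‖y t‖₊)) * ((2 : ℝ≥0)⁻¹ * 2) := by
                  rw [hρdef, hadef]; ring
              _ = C₁' * (a * (kap * ‖y t‖₊)) := by rw [h2, mul_one]
          have hhalf : ((ρ * (‖x' t‖₊ * ‖y t‖₊) : ℝ≥0) : ℝ≥0∞) ≤ rcInv φ t v₀ / 2 := by
            rw [ENNReal.le_div_iff_mul_le (Or.inl two_ne_zero) (Or.inl ENNReal.ofNat_ne_top)]
            calc ((ρ * (‖x' t‖₊ * ‖y t‖₊) : ℝ≥0) : ℝ≥0∞) * 2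
                = ((ρ * (‖x' t‖₊ * ‖y t‖₊) * 2 : ℝ≥0) : ℝ≥0∞) := by
                  rw [ENNReal.coe_mul]; norm_num
              _ = ((C₁' * (a * (kap * ‖y t‖₊)) : ℝ≥0) : ℝ≥0∞) := by rw [harg]
              _ ≤ rcInv φ t v₀ := hkey
          have hconc : φ t (ρ * (‖x' t‖₊ * ‖y t‖₊)) ≤ v₀ := by
            rcases eq_or_ne (rcInv φ t v₀) ∞ with hrc | hrc
            · exact rcInv_spec (by rw [hrc]; exact coe_lt_top)
            · rcases eq_or_ne (rcInv φ t v₀) 0 with hrc0 | hrc0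
              · have h0 : (ρ * (‖x' t‖₊ * ‖y t‖₊) : ℝ≥0) = 0 := by
                  have hh := hhalf
                  rw [hrc0] at hh
                  simpa using hh
                rw [h0, hYφ.1]
                exact zero_le
              · exact rcInv_spec (hhalf.trans_lt (ENNReal.half_lt_self hrc0 hrc))
          exact hconc
    have hgoal : ∫⁻ t, φ t ‖(ρ : ℝ) * (x' t * y t)‖₊ ∂μ < ∞ := by
      calc ∫⁻ t, φ t ‖(ρ : ℝ) * (x' t * y t)‖₊ ∂μ
          ≤ ∫⁻ t, (w t + φ₁ t ‖(l' : ℝ) * x' t‖₊) ∂μ := lintegral_mono_ae hpt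
        _ = (∫⁻ t, w t ∂μ) + ∫⁻ t, φ₁ t ‖(l' : ℝ) * x' t‖₊ ∂μ := lintegral_add_left hwmeas _
        _ < ∞ := ENNReal.add_lt_top.mpr ⟨hwint, hK₁'⟩
    exact hgoal
  exact ⟨x, y, hxmeas, hymeas, hxmem, hymul, hzxy⟩

end
end

section
/- Counterexample to the necessity of the inverse condition for factorization: on Ω = [0, 1/2) with Lebesgue measure, let φ(t,u) = max(u − t, 0) and φ₁(t,u) = u. Then L^φ = L^{φ₁} = L^1, the conjugate is (φ⊖φ₁)(t,u) = 0 for 0 ≤ u ≤ 1 and ∞ for u > 1, so L^{φ⊖φ₁} = L^∞ and the factorization L^{φ₁} ⊙ L^{φ⊖φ₁} = L^φ holds; yet there is no constant D > 0 with D·φ₁^{-1}(t,u)·(φ⊖φ₁)^{-1}(t,u) ≥ φ^{-1}(t,u) for all t ∈ [0,1/2) and u ≥ 0, since φ₁^{-1}(t,u)(φ⊖φ₁)^{-1}(t,u) = u while φ^{-1}(t,u) = u + t. -/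
open MeasureTheory ENNReal NNReal Filter

/-! Since `u - 1/2 ≤ φ(t,u) ≤ u` on `[0,1/2)`, the modulars of `φ` and `φ₁` are those of `L¹` up
to a bounded error, so `L^φ = L^{φ₁} = L¹`. As `s(u - 1) - t ≤ φ(t,su) - s ≤ s(u - 1)`, the
conjugate `φ ⊖ φ₁` is the Young function of `L^∞`, and `L¹ = L¹ ⊙ L^∞` (take `y = 1`; conversely
`|xy| ≤ ‖y‖_∞ |x|`). The superlevel sets `{v : u < φ(t,v)}` are open rays starting at `u`, `1` and
`u + t`, which are therefore the inverses; at `u = 0` the estimate would read `t ≤ D · 0 · 1`. -/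

section

variable {Ω : Type*}

noncomputable def linftyYoung (u : ℝ≥0) : ℝ≥0∞ :=
  if u ≤ 1 then 0 else ∞

theorem coe_lt_linftyYoung_iff (u v : ℝ≥0) : (u : ℝ≥0∞) < linftyYoung v ↔ 1 < v := by
  unfold linftyYoung
  split_ifs with hv <;> simpa using hv

theorem ENNReal.ofReal_sub_le_coe {t : ℝ} (ht : 0 ≤ t) (v : ℝ≥0) :
    ENNReal.ofReal (v - t) ≤ v := by
  simpa using ENNReal.ofReal_le_ofReal (by linarith : (v : ℝ) - t ≤ v)

theorem ENNReal.coe_le_ofReal_sub_add (t : ℝ) (v : ℝ≥0) :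
    (v : ℝ≥0∞) ≤ ENNReal.ofReal (v - t) + ENNReal.ofReal t :=
  calc (v : ℝ≥0∞) = ENNReal.ofReal ((v - t) + t) := by simp
    _ ≤ _ := ENNReal.ofReal_add_le

theorem ENNReal.coe_lt_ofReal_sub_iff {t : ℝ} (ht : 0 ≤ t) (u v : ℝ≥0) :
    (u : ℝ≥0∞) < ENNReal.ofReal (v - t) ↔ u + t.toNNReal < v := by
  rw [ENNReal.lt_ofReal_iff_toReal_lt coe_ne_top, ← NNReal.coe_lt_coe]
  push_cast [ENNReal.coe_toReal, Real.coe_toNNReal _ ht]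
  constructor <;> intro h <;> linarith

theorem rcInv_eq_of_lt_iff {φ : Ω → ℝ≥0 → ℝ≥0∞} {t : Ω} {u : ℝ≥0∞} {a : ℝ≥0}
    (h : ∀ v, u < φ t v ↔ a < v) : rcInv φ t u = a := by
  simp only [rcInv, h]
  apply le_antisymm
  · refine ENNReal.le_of_forall_pos_le_add fun ε hε _ => ?_
    exact iInf₂_le_of_le (a + ε) (lt_add_of_pos_right a hε) (by simp)
  · exact le_iInf₂ fun v hv => coe_le_coe.2 hv.le

theorem bFun_id (t : Ω) : bFun (fun (_ : Ω) (u : ℝ≥0) => (u : ℝ≥0∞)) t = ∞ := by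
  simp [bFun]

theorem ominus_id_eq {φ : Ω → ℝ≥0 → ℝ≥0∞} {t : Ω} {c : ℝ≥0} (hle : ∀ v : ℝ≥0, φ t v ≤ v)
    (hge : ∀ v : ℝ≥0, (v : ℝ≥0∞) ≤ φ t v + c) (u : ℝ≥0) :
    ominus φ (fun _ v => (v : ℝ≥0∞)) t u = linftyYoung u := by
  simp only [ominus, bFun_id, coe_lt_top, iSup_pos, linftyYoung]
  split_ifs with hu
  · refine ENNReal.iSup_eq_zero.2 fun s => tsub_eq_zero_of_le ((hle _).trans ?_)
    exact_mod_cast mul_le_of_le_one_right' hu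
  · refine iSup_eq_top.2 fun b hb => ?_
    lift b to ℝ≥0 using hb.ne
    have hu1 : u - 1 ≠ 0 := (tsub_pos_of_lt (not_le.1 hu)).ne'
    set s := (b + 1 + c) / (u - 1)
    have hs : s * u = b + 1 + (c + s) := by
      rw [← tsub_add_cancel_of_le (not_le.1 hu).le, mul_add, mul_one, div_mul_cancel₀ _ hu1]
      ring
    refine ⟨s, ?_⟩
    calc (b : ℝ≥0∞) < (b + 1 : ℝ≥0) := coe_lt_coe.2 (lt_add_one b)
      _ = (s * u : ℝ≥0) - (c + s : ℝ≥0) := by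
        rw [hs, coe_add (b + 1), ENNReal.add_sub_cancel_right coe_ne_top]
      _ ≤ φ t (s * u) - s := by
        rw [coe_add, ← tsub_tsub]
        exact tsub_le_tsub_right (tsub_le_iff_right.2 (hge _)) _

end

section

variable {Ω : Type*} [MeasurableSpace Ω] {μ : Measure Ω}

theorem lintegral_nnnorm_const_mul (lam : ℝ≥0) (x : Ω → ℝ) :
    ∫⁻ t, (‖(lam : ℝ) * x t‖₊ : ℝ≥0∞) ∂μ = lam * ∫⁻ t, (‖x t‖₊ : ℝ≥0∞) ∂μ := by
  simp_rw [nnnorm_mul, NNReal.nnnorm_eq, ENNReal.coe_mul]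
  exact lintegral_const_mul' _ _ coe_ne_top

theorem memLphi_iff_lintegral_lt_top {φ : Ω → ℝ≥0 → ℝ≥0∞} {C : ℝ≥0∞}
    (hle : ∀ᵐ t ∂μ, ∀ v : ℝ≥0, φ t v ≤ v) (hge : ∀ᵐ t ∂μ, ∀ v : ℝ≥0, (v : ℝ≥0∞) ≤ φ t v + C)
    (hC : C * μ Set.univ ≠ ∞) (x : Ω → ℝ) :
    MemLphi μ φ x ↔ ∫⁻ t, (‖x t‖₊ : ℝ≥0∞) ∂μ < ∞ := by
  constructor
  · rintro ⟨lam, hlam, hmod⟩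
    have : (lam : ℝ≥0∞) * ∫⁻ t, (‖x t‖₊ : ℝ≥0∞) ∂μ < ∞ :=
      calc _ = ∫⁻ t, (‖(lam : ℝ) * x t‖₊ : ℝ≥0∞) ∂μ := (lintegral_nnnorm_const_mul lam x).symm
        _ ≤ ∫⁻ t, (φ t ‖(lam : ℝ) * x t‖₊ + C) ∂μ := lintegral_mono_ae (hge.mono fun t ht => ht _)
        _ = modular μ φ (fun t => (lam : ℝ) * x t) + C * μ Set.univ := by
          rw [lintegral_add_right _ measurable_const, lintegral_const, modular]
        _ < ∞ := ENNReal.add_lt_top.2 ⟨hmod, hC.lt_top⟩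
    exact ENNReal.lt_top_of_mul_ne_top_right this.ne (by simpa using hlam.ne')
  · intro h
    refine ⟨1, one_pos, (lintegral_mono_ae (hle.mono fun t ht => ?_)).trans_lt h⟩
    simpa using ht ‖x t‖₊

theorem memLphi_one_of_ae_eq_linftyYoung {ψ : Ω → ℝ≥0 → ℝ≥0∞}
    (hψ : ∀ᵐ t ∂μ, ψ t = linftyYoung) : MemLphi μ ψ (fun _ => 1) := by
  refine ⟨1, one_pos, ?_⟩
  rw [modular, lintegral_congr_ae (hψ.mono fun t ht => congrFun ht _)]
  simp [linftyYoung]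

theorem MemLphi.exists_ae_nnnorm_le {ψ : Ω → ℝ≥0 → ℝ≥0∞} (hψ : ∀ᵐ t ∂μ, ψ t = linftyYoung)
    {y : Ω → ℝ} (hy : Measurable y) (h : MemLphi μ ψ y) : ∃ C : ℝ≥0, ∀ᵐ t ∂μ, ‖y t‖₊ ≤ C := by
  obtain ⟨lam, hlam, hmod⟩ := h
  have hg : Measurable fun t => linftyYoung ‖(lam : ℝ) * y t‖₊ :=
    Measurable.ite (measurableSet_le (by fun_prop) measurable_const) measurable_const
      measurable_const
  have hfin : ∫⁻ t, linftyYoung ‖(lam : ℝ) * y t‖₊ ∂μ ≠ ∞ := by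
    rw [← lintegral_congr_ae (hψ.mono fun t ht => congrFun ht _)]
    exact hmod.ne
  refine ⟨lam⁻¹, (ae_lt_top hg hfin).mono fun t ht => ?_⟩
  have hle : lam * ‖y t‖₊ ≤ 1 := by
    by_contra hgt
    simp [linftyYoung, nnnorm_mul, hgt] at ht
  exact (NNReal.le_inv_iff_mul_le hlam.ne').2 (by rwa [mul_comm])

theorem lintegral_nnnorm_mul_lt_top {x y : Ω → ℝ} {C : ℝ≥0}
    (hx : ∫⁻ t, (‖x t‖₊ : ℝ≥0∞) ∂μ < ∞) (hy : ∀ᵐ t ∂μ, ‖y t‖₊ ≤ C) :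
    ∫⁻ t, (‖x t * y t‖₊ : ℝ≥0∞) ∂μ < ∞ :=
  calc _ ≤ ∫⁻ t, C * (‖x t‖₊ : ℝ≥0∞) ∂μ := lintegral_mono_ae <| hy.mono fun t ht => by
          rw [nnnorm_mul, coe_mul, mul_comm]
          gcongr
    _ = C * ∫⁻ t, (‖x t‖₊ : ℝ≥0∞) ∂μ := lintegral_const_mul' _ _ coe_ne_top
    _ < ∞ := mul_lt_top coe_lt_top hx

theorem lintegral_lt_top_iff_exists_mul {ψ : Ω → ℝ≥0 → ℝ≥0∞} (hψ : ∀ᵐ t ∂μ, ψ t = linftyYoung)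
    {z : Ω → ℝ} (hz : Measurable z) :
    ∫⁻ t, (‖z t‖₊ : ℝ≥0∞) ∂μ < ∞ ↔
      ∃ x y : Ω → ℝ, Measurable x ∧ Measurable y ∧ ∫⁻ t, (‖x t‖₊ : ℝ≥0∞) ∂μ < ∞ ∧
        MemLphi μ ψ y ∧ ∀ t, z t = x t * y t := by
  constructor
  · exact fun h => ⟨z, fun _ => 1, hz, measurable_const, h,
      memLphi_one_of_ae_eq_linftyYoung hψ, fun t => (mul_one _).symm⟩
  · rintro ⟨x, y, -, hy, hx, hψy, hzxy⟩
    obtain ⟨C, hC⟩ := hψy.exists_ae_nnnorm_le hψ hy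
    simpa only [hzxy] using lintegral_nnnorm_mul_lt_top hx hC

end

/-- **counterexample.** On `Ω = [0,1/2)` with Lebesgue measure,
for `φ(t,u) = max(u - t, 0)` and `φ₁(t,u) = u`: both spaces equal `L¹`, the
conjugate is the `L^∞`-type function `(φ⊖φ₁)(t,u) = 0` for `u ≤ 1` and `∞` for
`u > 1` (so the factorization `L^{φ₁} ⊙ L^{φ⊖φ₁} = L^φ` holds), the inverses
are `φ₁⁻¹(t,u) = u`, `(φ⊖φ₁)⁻¹(t,u) = 1`, `φ⁻¹(t,u) = u + t`, and yet there is
no `D > 0` with `D·φ₁⁻¹(t,u)·(φ⊖φ₁)⁻¹(t,u) ≥ φ⁻¹(t,u)` everywhere. -/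
theorem factorization_counterexample :
    let μ : Measure ℝ := volume.restrict (Set.Ico (0 : ℝ) (1 / 2))
    let φ : ℝ → ℝ≥0 → ℝ≥0∞ := fun t u => ENNReal.ofReal ((u : ℝ) - t)
    let φ₁ : ℝ → ℝ≥0 → ℝ≥0∞ := fun _ u => (u : ℝ≥0∞)
    -- L^φ = L^{φ₁} = L¹
    (∀ x : ℝ → ℝ, Measurable x →
      ((MemLphi μ φ x ↔ (∫⁻ t, (‖x t‖₊ : ℝ≥0∞) ∂μ) < ∞) ∧
       (MemLphi μ φ₁ x ↔ (∫⁻ t, (‖x t‖₊ : ℝ≥0∞) ∂μ) < ∞))) ∧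
    -- the conjugate function
    (∀ t ∈ Set.Ico (0 : ℝ) (1 / 2), ∀ u : ℝ≥0,
      ominus φ φ₁ t u = if u ≤ 1 then 0 else ∞) ∧
    -- the factorization L^{φ₁} ⊙ L^{φ⊖φ₁} = L^φ
    (∀ z : ℝ → ℝ, Measurable z →
      (MemLphi μ φ z ↔
        ∃ x y : ℝ → ℝ, Measurable x ∧ Measurable y ∧
          MemLphi μ φ₁ x ∧ MemLphi μ (ominus φ φ₁) y ∧ ∀ t, z t = x t * y t)) ∧
    -- the inverse computations
    (∀ t ∈ Set.Ico (0 : ℝ) (1 / 2), ∀ u : ℝ≥0,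
      rcInv φ₁ t u = (u : ℝ≥0∞) ∧ rcInv (ominus φ φ₁) t u = 1 ∧
      rcInv φ t u = (u : ℝ≥0∞) + ENNReal.ofReal t) ∧
    -- failure of the lower inverse estimate
    ¬ ∃ D : ℝ≥0∞, 0 < D ∧ ∀ t ∈ Set.Ico (0 : ℝ) (1 / 2), ∀ u : ℝ≥0,
        rcInv φ t u ≤ D * rcInv φ₁ t u * rcInv (ominus φ φ₁) t u := by
  intro μ φ φ₁
  have hIco : ∀ᵐ t ∂μ, t ∈ Set.Ico (0 : ℝ) (1 / 2) := ae_restrict_mem measurableSet_Ico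
  have hL1 : ∀ x, MemLphi μ φ x ↔ ∫⁻ t, (‖x t‖₊ : ℝ≥0∞) ∂μ < ∞ :=
    memLphi_iff_lintegral_lt_top (C := ENNReal.ofReal (1 / 2))
      (hIco.mono fun t ht => ENNReal.ofReal_sub_le_coe ht.1)
      (hIco.mono fun t ht v => (ENNReal.coe_le_ofReal_sub_add t v).trans (by gcongr; exact ht.2.le))
      (mul_ne_top ofReal_ne_top (measure_ne_top μ _))
  have hL1₁ : ∀ x, MemLphi μ φ₁ x ↔ ∫⁻ t, (‖x t‖₊ : ℝ≥0∞) ∂μ < ∞ :=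
    memLphi_iff_lintegral_lt_top (C := 0) (.of_forall fun _ _ => le_rfl)
      (.of_forall fun _ _ => le_self_add) (by simp)
  have hψ : ∀ t ∈ Set.Ico (0 : ℝ) (1 / 2), ominus φ φ₁ t = linftyYoung := fun t ht =>
    funext <| ominus_id_eq (c := t.toNNReal) (ENNReal.ofReal_sub_le_coe ht.1)
      (ENNReal.coe_le_ofReal_sub_add t)
  have hinv : ∀ t ∈ Set.Ico (0 : ℝ) (1 / 2), ∀ u : ℝ≥0,
      rcInv φ₁ t u = (u : ℝ≥0∞) ∧ rcInv (ominus φ φ₁) t u = 1 ∧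
      rcInv φ t u = (u : ℝ≥0∞) + ENNReal.ofReal t := fun t ht u =>
    ⟨rcInv_eq_of_lt_iff fun _ => coe_lt_coe,
      rcInv_eq_of_lt_iff fun v => by rw [hψ t ht]; exact coe_lt_linftyYoung_iff u v,
      rcInv_eq_of_lt_iff (ENNReal.coe_lt_ofReal_sub_iff ht.1 u)⟩
  refine ⟨fun x _ => ⟨hL1 x, hL1₁ x⟩, fun t ht u => congrFun (hψ t ht) u, fun z hz => ?_,
    hinv, ?_⟩
  · simpa only [hL1, hL1₁] using
      lintegral_lt_top_iff_exists_mul (hIco.mono hψ) hz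
  · rintro ⟨D, -, hD⟩
    have ht : (1 / 4 : ℝ) ∈ Set.Ico (0 : ℝ) (1 / 2) := by norm_num
    obtain ⟨hinv₁, hinvψ, hinvφ⟩ := hinv _ ht 0
    have := hD _ ht 0
    rw [hinv₁, hinvψ, hinvφ] at this
    norm_num at this
end

section
/- For an atom ω of the measure space and a Musielak–Orlicz function φ₁, the Luxemburg norm of the characteristic function of {ω} equals the reciprocal-inverse value: ‖χ_{{ω}}‖_{φ₁} = 1/φ₁^{-1}(ω, 1/μ({ω})), where φ₁^{-1}(ω,u) = inf{v ≥ 0 : φ₁(ω,v) > u}. -/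
open MeasureTheory ENNReal NNReal Filter

noncomputable section

variable {Ω : Type*} [MeasurableSpace Ω]

lemma young_mono_aux {ψ : ℝ≥0 → ℝ≥0∞} (h : IsYoung ψ) : Monotone ψ := by
  intro u v huv
  rcases eq_or_ne v 0 with rfl | hv
  · have : u = 0 := le_antisymm huv zero_le
    simp [this]
  · have hθ : u / v ≤ 1 := by
      rw [div_le_one hv.bot_lt]; exact huv
    have key := h.2.2 v 0 (u / v) hθ
    have heq : u / v * v + (1 - u / v) * 0 = u := by
      rw [mul_zero, add_zero, div_mul_cancel₀ _ hv]
    rw [heq, h.1, mul_zero, add_zero] at key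
    calc ψ u ≤ ((u / v : ℝ≥0) : ℝ≥0∞) * ψ v := key
    _ ≤ 1 * ψ v := mul_le_mul_left (by exact_mod_cast hθ) _
    _ = ψ v := one_mul _

lemma key_inf_aux (ψ : ℝ≥0 → ℝ≥0∞) (hmono : Monotone ψ)
    (htop : Tendsto ψ atTop (nhds (∞ : ℝ≥0∞))) (c : ℝ≥0∞) (hc : c < ∞) :
    (⨅ (lam : ℝ≥0) (_ : 0 < lam ∧ ψ lam⁻¹ ≤ c), (lam : ℝ≥0∞)) =
      (⨅ (v : ℝ≥0) (_ : c < ψ v), (v : ℝ≥0∞))⁻¹ := by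
  set I : ℝ≥0∞ := ⨅ (v : ℝ≥0) (_ : c < ψ v), (v : ℝ≥0∞) with hI
  obtain ⟨v₀, hv₀⟩ : ∃ v : ℝ≥0, c < ψ v := (htop.eventually (eventually_mem_set.2
    (Ioi_mem_nhds hc))).exists
  have hItop : I ≠ ∞ := ne_top_of_le_ne_top coe_ne_top (iInf₂_le v₀ hv₀)
  apply le_antisymm
  · by_contra hcon
    push_neg at hcon
    obtain ⟨r, hr1, hr2⟩ := ENNReal.lt_iff_exists_nnreal_btwn.mp hcon
    have hr0 : 0 < r := by
      have : (0 : ℝ≥0∞) < I⁻¹ := ENNReal.inv_pos.mpr hItop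
      exact_mod_cast this.trans hr1
    have hψr : ψ r⁻¹ ≤ c := by
      by_contra hgt
      push_neg at hgt
      have h1 : I ≤ ((r⁻¹ : ℝ≥0) : ℝ≥0∞) := iInf₂_le r⁻¹ hgt
      have h2 : ((r⁻¹ : ℝ≥0) : ℝ≥0∞) < I := by
        rw [ENNReal.coe_inv hr0.ne', ← inv_inv I]
        exact ENNReal.inv_lt_inv.mpr hr1
      exact absurd h1 h2.not_ge
    exact absurd (iInf₂_le r ⟨hr0, hψr⟩) hr2.not_ge
  · refine le_iInf₂ fun lam hlam => ?_
    obtain ⟨hlam0, hlamc⟩ := hlam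
    have hle : ((lam⁻¹ : ℝ≥0) : ℝ≥0∞) ≤ I := by
      refine le_iInf₂ fun v hv => ?_
      rw [ENNReal.coe_le_coe]
      by_contra hvl
      push_neg at hvl
      exact absurd (hmono hvl.le |>.trans hlamc) hv.not_ge
    calc I⁻¹ ≤ ((lam⁻¹ : ℝ≥0) : ℝ≥0∞)⁻¹ := ENNReal.inv_le_inv.mpr hle
    _ = (lam : ℝ≥0∞) := by rw [ENNReal.coe_inv hlam0.ne', inv_inv]

/-- For an atom `ω` (a singleton of positive finite measure),
the Luxemburg norm of `χ_{ω}` equals `1/φ₁⁻¹(ω, 1/μ({ω}))`. -/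
theorem luxNorm_indicator_singleton (μ : Measure Ω) [SigmaFinite μ]
    [MeasurableSingletonClass Ω] (φ₁ : Ω → ℝ≥0 → ℝ≥0∞)
    (hφ₁ : IsMusielakOrlicz μ φ₁) (ω : Ω)
    (hω : 0 < μ {ω}) (hω' : μ {ω} < ∞) :
    luxNorm μ φ₁ (({ω} : Set Ω).indicator fun _ => (1 : ℝ)) =
      (rcInv φ₁ ω (μ {ω})⁻¹)⁻¹ := by
  have hm0 : μ {ω} ≠ 0 := hω.ne'
  have hmtop : μ {ω} ≠ ∞ := hω'.ne
  -- Young at ω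
  have hY : IsYoung (φ₁ ω) := by
    by_contra hnot
    have hnull : μ {t | ¬ IsYoung (φ₁ t)} = 0 := ae_iff.mp hφ₁.1
    have : μ {ω} = 0 := measure_mono_null (by
      intro t ht
      rcases ht with rfl
      exact hnot) hnull
    exact hm0 this
  -- modular computation
  have hmod : ∀ lam : ℝ≥0, 0 < lam →
      modular μ φ₁ (fun t => ({ω} : Set Ω).indicator (fun _ => (1 : ℝ)) t / (lam : ℝ)) =
        μ {ω} * φ₁ ω lam⁻¹ := by
    intro lam hlam
    unfold modular
    have hae : ∀ᵐ t ∂μ,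
        φ₁ t ‖({ω} : Set Ω).indicator (fun _ => (1 : ℝ)) t / (lam : ℝ)‖₊ =
          ({ω} : Set Ω).indicator (fun _ => φ₁ ω lam⁻¹) t := by
      filter_upwards [hφ₁.1] with t ht
      by_cases htω : t = ω
      · subst htω
        rw [Set.indicator_of_mem (Set.mem_singleton t),
          Set.indicator_of_mem (Set.mem_singleton t)]
        congr 1
        have : (1 : ℝ) / (lam : ℝ) = ((lam⁻¹ : ℝ≥0) : ℝ) := by
          push_cast
          rw [one_div]
        rw [this, NNReal.nnnorm_eq]
      · have hmem : t ∉ ({ω} : Set Ω) := by simpa using htω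
        rw [Set.indicator_of_notMem hmem, Set.indicator_of_notMem hmem]
        simp [ht.1]
    rw [lintegral_congr_ae hae,
      lintegral_indicator_const (measurableSet_singleton ω), mul_comm]
  -- rewrite the Luxemburg norm condition
  have hcond : ∀ lam : ℝ≥0,
      (0 < lam ∧ modular μ φ₁
        (fun t => ({ω} : Set Ω).indicator (fun _ => (1 : ℝ)) t / (lam : ℝ)) ≤ 1) ↔
      (0 < lam ∧ φ₁ ω lam⁻¹ ≤ (μ {ω})⁻¹) := by
    intro lam
    constructor
    · rintro ⟨h1, h2⟩
      refine ⟨h1, ?_⟩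
      rw [hmod lam h1, mul_comm] at h2
      exact ENNReal.le_inv_iff_mul_le.mpr h2
    · rintro ⟨h1, h2⟩
      refine ⟨h1, ?_⟩
      rw [hmod lam h1, mul_comm]
      exact ENNReal.le_inv_iff_mul_le.mp h2
  unfold luxNorm rcInv
  simp_rw [hcond]
  exact key_inf_aux (φ₁ ω) (young_mono_aux hY) hY.2.1 _ (ENNReal.inv_lt_top.mpr hω)
end
end

section
/- For the truncated conjugate φ⊖_aφ₁ with a > 0 and t in the set Ω_∞ = {t : 0 < b_{φ₁}(t) < ∞}, the finiteness threshold satisfies b_{φ⊖_aφ₁}(t) = (a+1)·b_φ(t) / (a·b_{φ₁}(t)). -/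
open MeasureTheory ENNReal NNReal Filter

noncomputable section

variable {Ω : Type*} [MeasurableSpace Ω]

section AuxForBFun
variable {Ω : Type*} [MeasurableSpace Ω]

lemma IsYoung.mono'_s19 {φ : ℝ≥0 → ℝ≥0∞} (h : IsYoung φ) : Monotone φ := by
  intro u v huv
  rcases eq_or_ne v 0 with rfl | hv
  · have : u = 0 := le_antisymm huv zero_le
    simp [this]
  · have hθ : u / v ≤ 1 := div_le_one_of_le₀ huv zero_le
    have hc := h.2.2 v 0 (u / v) hθ
    rw [h.1] at hc
    simp only [mul_zero, zero_add, add_zero] at hc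
    rw [div_mul_cancel₀ _ hv] at hc
    calc φ u ≤ (↑(u / v) : ℝ≥0∞) * φ v := hc
      _ ≤ 1 * φ v := by gcongr; exact_mod_cast hθ
      _ = φ v := one_mul _

lemma bFun_le' {φ : Ω → ℝ≥0 → ℝ≥0∞} {t : Ω} {v : ℝ≥0} (h : φ t v = ∞) :
    bFun φ t ≤ v := iInf₂_le v h

lemma ne_top_of_lt_bFun' {φ : Ω → ℝ≥0 → ℝ≥0∞} {t : Ω} {v : ℝ≥0}
    (h : (v : ℝ≥0∞) < bFun φ t) : φ t v ≠ ∞ :=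
  fun h' => absurd (bFun_le' h') h.not_ge

lemma eq_top_of_bFun_lt' {φ : Ω → ℝ≥0 → ℝ≥0∞} {t : Ω} {v : ℝ≥0}
    (hm : Monotone (φ t)) (h : bFun φ t < v) : φ t v = ∞ := by
  by_contra h'
  have : (v : ℝ≥0∞) ≤ bFun φ t := by
    refine le_iInf₂ fun w hw => ?_
    by_contra hwv
    push_neg at hwv
    exact h' (top_le_iff.mp (hw ▸ hm (by exact_mod_cast hwv.le)))
  exact absurd h this.not_gt

end AuxForBFun

/-- For `t ∈ Ω_∞ = {0 < b_{φ₁} < ∞}` the finiteness threshold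
of the truncated conjugate satisfies
`b_{φ ⊖_a φ₁}(t) = (a+1)·b_φ(t) / (a·b_{φ₁}(t))`. -/
theorem bFun_ominusTr (μ : Measure Ω) [SigmaFinite μ]
    (φ φ₁ : Ω → ℝ≥0 → ℝ≥0∞)
    (hφ : IsMusielakOrlicz μ φ) (hφ₁ : IsMusielakOrlicz μ φ₁)
    (a : ℝ≥0) (ha : 0 < a) :
    ∀ᵐ t ∂μ, (0 < bFun φ₁ t ∧ bFun φ₁ t < ∞) →
      bFun (ominusTr a φ φ₁) t =
        ((a : ℝ≥0∞) + 1) * bFun φ t / ((a : ℝ≥0∞) * bFun φ₁ t) := by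
  filter_upwards [hφ.1, hφ₁.1] with t hY hY₁ ht
  obtain ⟨hb₁pos, hb₁fin⟩ := ht
  set b : ℝ≥0∞ := bFun φ t with hbdef
  set b₁ : ℝ≥0∞ := bFun φ₁ t with hb₁def
  set S : ℝ≥0∞ := ((a : ℝ≥0∞) / ((a : ℝ≥0∞) + 1)) * b₁ with hSdef
  have hafrac_pos : 0 < (a : ℝ≥0∞) / ((a : ℝ≥0∞) + 1) :=
    ENNReal.div_pos (by exact_mod_cast ha.ne') (by simp)
  have hafrac_lt_one : (a : ℝ≥0∞) / ((a : ℝ≥0∞) + 1) < 1 := by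
    rw [ENNReal.div_lt_iff (Or.inl (by simp)) (Or.inl (by simp))]
    simpa using ENNReal.lt_add_right coe_ne_top one_ne_zero
  have hS_pos : 0 < S := ENNReal.mul_pos hafrac_pos.ne' hb₁pos.ne'
  have hS_lt_b₁ : S < b₁ := by
    calc S < 1 * b₁ := by
          rw [hSdef, mul_comm _ b₁, mul_comm 1 b₁]
          exact ENNReal.mul_lt_mul_right hb₁pos.ne' hb₁fin.ne hafrac_lt_one
      _ = b₁ := one_mul _
  have hS_fin : S ≠ ∞ := (hS_lt_b₁.trans hb₁fin).ne
  set s₀ : ℝ≥0 := S.toNNReal with hs₀def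
  have hs₀coe : (s₀ : ℝ≥0∞) = S := ENNReal.coe_toNNReal hS_fin
  have hs₀pos : (0 : ℝ≥0) < s₀ := by
    rw [← ENNReal.coe_lt_coe, hs₀coe]; exact_mod_cast hS_pos
  have hφ₁s₀ : φ₁ t s₀ ≠ ∞ := ne_top_of_lt_bFun' (hs₀coe ▸ hS_lt_b₁)
  -- key equivalence
  have hkey : ∀ u : ℝ≥0, ominusTr a φ φ₁ t u = ∞ ↔ φ t (s₀ * u) = ∞ := by
    intro u
    rw [ominusTr, if_neg hb₁fin.ne]
    constructor
    · intro h
      by_contra h'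
      have hle : (⨆ (s : ℝ≥0) (_ : (s : ℝ≥0∞) ≤ S), φ t (s * u) - φ₁ t s)
          ≤ φ t (s₀ * u) := by
        refine iSup₂_le fun s hs => ?_
        have hss₀ : s ≤ s₀ := by
          rw [← ENNReal.coe_le_coe, hs₀coe]; exact hs
        exact le_trans (tsub_le_self.trans (hY.mono'_s19 (mul_le_mul_left hss₀ u)))
          le_rfl
      rw [h] at hle
      exact h' (top_le_iff.mp hle)
    · intro h
      have hterm : φ t (s₀ * u) - φ₁ t s₀ = ∞ := by
        rw [h]; exact ENNReal.top_sub hφ₁s₀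
      refine top_le_iff.mp ?_
      calc (∞ : ℝ≥0∞) = φ t (s₀ * u) - φ₁ t s₀ := hterm.symm
        _ ≤ ⨆ (s : ℝ≥0) (_ : (s : ℝ≥0∞) ≤ S), φ t (s * u) - φ₁ t s :=
            le_iSup₂ (f := fun (s : ℝ≥0) (_ : (s : ℝ≥0∞) ≤ S) => φ t (s * u) - φ₁ t s)
              s₀ (le_of_eq hs₀coe)
  -- compute bFun of ominusTr
  have hBeq : bFun (ominusTr a φ φ₁) t = b / S := by
    rw [bFun]
    apply le_antisymm
    · -- ≤ b / S
      rcases eq_or_ne (b / S) ∞ with hbs | hbs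
      · rw [hbs]; exact le_top
      refine ENNReal.le_of_forall_pos_le_add fun ε hε hlt => ?_
      set u : ℝ≥0 := (b / S).toNNReal + ε with hudef
      have hbSfin : b / S ≠ ∞ := hbs
      have hucoe : (u : ℝ≥0∞) = b / S + ε := by
        push_cast [hudef]; rw [ENNReal.coe_toNNReal hbSfin]
      have hbfin : b ≠ ∞ := by
        intro hbtop
        apply hbs
        rw [hbtop]
        exact ENNReal.top_div_of_ne_top hS_fin
      have hgt : b < (s₀ : ℝ≥0∞) * u := by
        rw [hucoe, mul_add, hs₀coe, ENNReal.mul_div_cancel hS_pos.ne' hS_fin]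
        exact ENNReal.lt_add_right hbfin
          (by simp [hS_pos.ne', hε.ne'])
      have hφtop : φ t (s₀ * u) = ∞ := by
        apply eq_top_of_bFun_lt' hY.mono'_s19
        rw [← hbdef]; exact_mod_cast hgt
      have := iInf₂_le (f := fun (v : ℝ≥0) (_ : ominusTr a φ φ₁ t v = ∞) => (v : ℝ≥0∞))
        u ((hkey u).mpr hφtop)
      exact this.trans (le_of_eq hucoe)
    · -- ≥ b / S
      refine le_iInf₂ fun u hu => ?_
      have hφtop := (hkey u).mp hu
      have hble : b ≤ (s₀ : ℝ≥0∞) * u := by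
        rw [hbdef]
        exact_mod_cast bFun_le' hφtop
      rw [ENNReal.div_le_iff hS_pos.ne' hS_fin]
      calc b ≤ (s₀ : ℝ≥0∞) * u := hble
        _ = u * S := by rw [hs₀coe, mul_comm]
  rw [hBeq, hSdef]
  -- arithmetic: b / ((a/(a+1)) * b₁) = (a+1) * b / (a * b₁)
  have ha' : (a : ℝ≥0∞) ≠ 0 := by exact_mod_cast ha.ne'
  have ha1 : (a : ℝ≥0∞) + 1 ≠ 0 := by simp
  have ha1fin : (a : ℝ≥0∞) + 1 ≠ ∞ := by simp
  have hinv : (((a : ℝ≥0∞) / ((a : ℝ≥0∞) + 1)) * b₁)⁻¹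
      = ((a : ℝ≥0∞) + 1) * ((a : ℝ≥0∞) * b₁)⁻¹ := by
    rw [ENNReal.mul_inv (Or.inl hafrac_pos.ne') (Or.inr hb₁pos.ne'),
      ENNReal.inv_div (Or.inl ha1fin) (Or.inl ha1),
      ENNReal.mul_inv (Or.inl ha') (Or.inr hb₁pos.ne'),
      div_eq_mul_inv, mul_assoc]
  rw [div_eq_mul_inv, hinv, div_eq_mul_inv]
  ring

end
end
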